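/- arXiv:1506.02852 — 8 statements merged into one kernel-verified Lean document; each statement's English description precedes it below -/
import Mathlib

section
/- A set function F on subsets of a finite set V with F(∅)=0 is submodular if and only if its Lovász extension f: ℝ^n → ℝ is convex. -/
open Finset

/-- A set function on subsets of `Fin n` is submodular. -/
def Submodular {n : ℕ} (F : Finset (Fin n) → ℝ) : Prop :=
  ∀ A B : Finset (Fin n), F (A ∪ B) + F (A ∩ B) ≤ F A + F B

/-- The Lovász extension of a set function, via a permutation sorting `w` decreasingly. -/
noncomputable def lovasz {n : ℕ} (F : Finset (Fin n) → ℝ) (w : Fin n → ℝ) : ℝ :=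
  let σ := Tuple.sort (fun i => -w i)
  ∑ k : Fin n, w (σ k) *
    (F ((Finset.Iic k).image σ) - F ((Finset.Iio k).image σ))

/-- The base polytope of a set function. -/
def basePolytope {n : ℕ} (F : Finset (Fin n) → ℝ) : Set (Fin n → ℝ) :=
  {s | (∑ i, s i) = F Finset.univ ∧
    ∀ A : Finset (Fin n), (∑ i ∈ A, s i) ≤ F A}


namespace LovaszAux

variable {n : ℕ}

/-- The sorting permutation. -/
noncomputable def sp (w : Fin n → ℝ) : Equiv.Perm (Fin n) := Tuple.sort (fun i => -w i)

/-- The set of the first `k` sorted indices. -/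
noncomputable def Bst (w : Fin n → ℝ) (k : ℕ) : Finset (Fin n) :=
  (Finset.univ.filter (fun i : Fin n => (i : ℕ) < k)).image (sp w)

/-- The `k`-th largest value of `w` (0 past the end). -/
noncomputable def uf (w : Fin n → ℝ) (k : ℕ) : ℝ :=
  if h : k < n then w (sp w ⟨k, h⟩) else 0

lemma w_anti (w : Fin n → ℝ) {j l : Fin n} (h : j ≤ l) : w (sp w l) ≤ w (sp w j) := by
  have h2 := Tuple.monotone_sort (fun i => -w i) h
  simp only [Function.comp_apply] at h2
  simp only [sp]
  linarith

lemma mem_Bst (w : Fin n → ℝ) (k : ℕ) (i : Fin n) :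
    i ∈ Bst w k ↔ ((sp w).symm i : ℕ) < k := by
  simp only [Bst, Finset.mem_image, Finset.mem_filter, Finset.mem_univ, true_and]
  constructor
  · rintro ⟨j, hj, rfl⟩; simpa using hj
  · intro h; exact ⟨(sp w).symm i, h, (sp w).apply_symm_apply i⟩

lemma Bst_zero (w : Fin n → ℝ) : Bst w 0 = ∅ := by
  ext i; simp [mem_Bst]

lemma Bst_of_le (w : Fin n → ℝ) {k : ℕ} (h : n ≤ k) : Bst w k = Finset.univ := by
  ext i; simp only [mem_Bst, Finset.mem_univ, iff_true]
  exact lt_of_lt_of_le ((sp w).symm i).isLt h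

lemma notMem_Bst (w : Fin n → ℝ) {k : ℕ} (h : k < n) : sp w ⟨k, h⟩ ∉ Bst w k := by
  simp [mem_Bst]

lemma Bst_succ (w : Fin n → ℝ) {k : ℕ} (h : k < n) :
    Bst w (k + 1) = insert (sp w ⟨k, h⟩) (Bst w k) := by
  ext i
  simp only [mem_Bst, Finset.mem_insert]
  constructor
  · intro hi
    rcases Nat.lt_succ_iff_lt_or_eq.mp hi with h1 | h1
    · exact Or.inr h1
    · left
      have : (sp w).symm i = ⟨k, h⟩ := Fin.ext h1
      rw [← this, (sp w).apply_symm_apply]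
  · rintro (rfl | hi)
    · simp [Nat.lt_succ_iff]
    · exact Nat.lt_succ_of_lt hi

/-- Abel summation. -/
lemma abel (u G : ℕ → ℝ) (m : ℕ) :
    ∑ k ∈ Finset.range m, u k * (G (k + 1) - G k) =
      (∑ k ∈ Finset.range m, (u k - u (k + 1)) * G (k + 1)) + u m * G m - u 0 * G 0 := by
  induction m with
  | zero => simp
  | succ m ih => rw [Finset.sum_range_succ, Finset.sum_range_succ, ih]; ring

lemma lovasz_eq (F : Finset (Fin n) → ℝ) (w : Fin n → ℝ) :
    lovasz F w = ∑ k ∈ Finset.range n, uf w k * (F (Bst w (k + 1)) - F (Bst w k)) := by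
  have : lovasz F w = ∑ k : Fin n, w (sp w k) *
      (F ((Finset.Iic k).image (sp w)) - F ((Finset.Iio k).image (sp w))) := rfl
  rw [this]
  rw [← Fin.sum_univ_eq_sum_range (fun k => uf w k * (F (Bst w (k + 1)) - F (Bst w k))) n]
  apply Finset.sum_congr rfl
  intro k _
  have h1 : (Finset.Iic k).image (sp w) = Bst w ((k : ℕ) + 1) := by
    ext i
    simp only [mem_Bst, Finset.mem_image, Finset.mem_Iic, Nat.lt_succ_iff]
    constructor
    · rintro ⟨j, hj, rfl⟩; rw [Equiv.symm_apply_apply]; exact Fin.le_def.mp hj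
    · intro h; exact ⟨(sp w).symm i, Fin.le_def.mpr h, (sp w).apply_symm_apply i⟩
  have h2 : (Finset.Iio k).image (sp w) = Bst w (k : ℕ) := by
    ext i
    simp only [mem_Bst, Finset.mem_image, Finset.mem_Iio]
    constructor
    · rintro ⟨j, hj, rfl⟩; rw [Equiv.symm_apply_apply]; exact Fin.lt_def.mp hj
    · intro h; exact ⟨(sp w).symm i, Fin.lt_def.mpr h, (sp w).apply_symm_apply i⟩
  have h3 : uf w (k : ℕ) = w (sp w k) := by
    rw [uf, dif_pos k.isLt]
  rw [h1, h2, h3]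

variable {F : Finset (Fin n) → ℝ} {w : Fin n → ℝ}

lemma uf_top (w : Fin n → ℝ) : uf w n = 0 := dif_neg (lt_irrefl n)

lemma lovasz_eq' (hF0 : F ∅ = 0) (w : Fin n → ℝ) :
    lovasz F w = ∑ k ∈ Finset.range n, (uf w k - uf w (k + 1)) * F (Bst w (k + 1)) := by
  rw [lovasz_eq, abel (uf w) (fun k => F (Bst w k)) n, uf_top, Bst_zero, hF0]
  ring

lemma uf_anti {k : ℕ} (hk : k + 1 < n) : uf w (k + 1) ≤ uf w k := by
  rw [uf, uf, dif_pos hk, dif_pos (Nat.lt_of_succ_lt hk)]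
  exact w_anti w (by exact Nat.le_succ k)

/-- Any point of the base polytope has inner product with `w` at most `lovasz F w`. -/
lemma dot_le_lovasz (hF0 : F ∅ = 0) {s : Fin n → ℝ} (hs : s ∈ basePolytope F)
    (w : Fin n → ℝ) : ∑ i, s i * w i ≤ lovasz F w := by
  obtain ⟨hs1, hs2⟩ := hs
  have key : ∑ i, s i * w i =
      ∑ k ∈ Finset.range n, (uf w k - uf w (k + 1)) * (∑ i ∈ Bst w (k + 1), s i) := by
    have e1 : ∑ i, s i * w i = ∑ k : Fin n, s (sp w k) * w (sp w k) :=
      (Equiv.sum_comp (sp w) (fun i => s i * w i)).symm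
    have e2 : ∀ k : Fin n, s (sp w k) * w (sp w k) =
        uf w (k : ℕ) * ((∑ i ∈ Bst w ((k : ℕ) + 1), s i) - ∑ i ∈ Bst w (k : ℕ), s i) := by
      intro k
      rw [Bst_succ w k.isLt, Finset.sum_insert (notMem_Bst w k.isLt), uf, dif_pos k.isLt]
      simp [Fin.eta]
      ring
    rw [e1, Finset.sum_congr rfl (fun k _ => e2 k),
      Fin.sum_univ_eq_sum_range (fun k => uf w k * ((∑ i ∈ Bst w (k + 1), s i) - ∑ i ∈ Bst w k, s i)) n,
      abel (uf w) (fun k => ∑ i ∈ Bst w k, s i) n, uf_top, Bst_zero]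
    simp
  rw [key, lovasz_eq' hF0]
  apply Finset.sum_le_sum
  intro k hk
  rw [Finset.mem_range] at hk
  rcases eq_or_lt_of_le (Nat.succ_le_of_lt hk) with h | h
  · have : Bst w (k + 1) = Finset.univ := Bst_of_le w (le_of_eq h.symm)
    rw [this, hs1]
  · have hc : 0 ≤ uf w k - uf w (k + 1) := sub_nonneg.mpr (uf_anti h)
    exact mul_le_mul_of_nonneg_left (hs2 _) hc

/-- The greedy vertex. -/
noncomputable def gre (F : Finset (Fin n) → ℝ) (w : Fin n → ℝ) : Fin n → ℝ :=
  fun i => F (Bst w (((sp w).symm i : ℕ) + 1)) - F (Bst w ((sp w).symm i : ℕ))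

lemma gre_apply (k : Fin n) :
    gre F w (sp w k) = F (Bst w ((k : ℕ) + 1)) - F (Bst w (k : ℕ)) := by
  rw [gre, Equiv.symm_apply_apply]

lemma gre_dot : ∑ i, gre F w i * w i = lovasz F w := by
  rw [lovasz_eq,
    ← Fin.sum_univ_eq_sum_range (fun k => uf w k * (F (Bst w (k + 1)) - F (Bst w k))) n,
    ← Equiv.sum_comp (sp w) (fun i => gre F w i * w i)]
  apply Finset.sum_congr rfl
  intro k _
  rw [gre_apply, uf, dif_pos k.isLt]
  simp [Fin.eta]
  ring

lemma gre_mem (hsub : Submodular F) (hF0 : F ∅ = 0) : gre F w ∈ basePolytope F := by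
  constructor
  · rw [← Equiv.sum_comp (sp w) (gre F w), Finset.sum_congr rfl (fun k _ => gre_apply k),
      Fin.sum_univ_eq_sum_range (fun k => F (Bst w (k + 1)) - F (Bst w k)) n,
      Finset.sum_range_sub (fun k => F (Bst w k)) n, Bst_zero, hF0, Bst_of_le w (le_refl n)]
    ring
  · intro A
    have claim : ∀ k : ℕ, ∑ i ∈ A ∩ Bst w k, gre F w i ≤ F (A ∩ Bst w k) := by
      intro k
      induction k with
      | zero => simp [Bst_zero, hF0]
      | succ k ih =>
        by_cases hk : k < n
        · set c := sp w ⟨k, hk⟩ with hc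
          have hcB : c ∉ Bst w k := notMem_Bst w hk
          rw [Bst_succ w hk]
          by_cases hcA : c ∈ A
          · rw [Finset.inter_insert_of_mem hcA,
              Finset.sum_insert (fun hmem => hcB (Finset.mem_of_mem_inter_right hmem))]
            have hgc : gre F w c = F (Bst w (k + 1)) - F (Bst w k) := gre_apply ⟨k, hk⟩
            have hsm := hsub (insert c (A ∩ Bst w k)) (Bst w k)
            have hu : insert c (A ∩ Bst w k) ∪ Bst w k = insert c (Bst w k) := by
              rw [Finset.insert_union, Finset.union_eq_right.mpr Finset.inter_subset_right]
            have hi : insert c (A ∩ Bst w k) ∩ Bst w k = A ∩ Bst w k := by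
              rw [Finset.insert_inter_of_notMem hcB, Finset.inter_assoc, Finset.inter_self]
            rw [hu, hi] at hsm
            rw [Bst_succ w hk] at hgc
            linarith
          · rw [Finset.inter_insert_of_notMem hcA]
            exact ih
        · have : Bst w (k + 1) = Bst w k := by
            rw [Bst_of_le w (Nat.le_of_not_lt hk), Bst_of_le w (Nat.le_succ_of_le (Nat.le_of_not_lt hk))]
          rw [this]; exact ih
    have := claim n
    rwa [Bst_of_le w (le_refl n), Finset.inter_univ] at this

lemma Bst_filter (w : Fin n → ℝ) {k : ℕ} (hk : k < n) (t : ℝ)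
    (h1 : ∀ j : Fin n, (j : ℕ) ≤ k → t ≤ w (sp w j))
    (h2 : ∀ j : Fin n, k < (j : ℕ) → w (sp w j) < t) :
    Bst w (k + 1) = Finset.univ.filter (fun i => t ≤ w i) := by
  ext i
  rw [mem_Bst, Finset.mem_filter]
  simp only [Finset.mem_univ, true_and]
  have hwi : w i = w (sp w ((sp w).symm i)) := by rw [(sp w).apply_symm_apply]
  constructor
  · intro h; rw [hwi]; exact h1 _ (Nat.lt_succ_iff.mp h)
  · intro h
    by_contra hcon
    have hj : k < (((sp w).symm i : Fin n) : ℕ) := Nat.lt_of_succ_le (Nat.le_of_not_lt hcon)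
    rw [hwi] at h
    exact absurd h (not_le.mpr (h2 _ hj))

lemma lovasz_pair (hF0 : F ∅ = 0) (A B : Finset (Fin n)) :
    lovasz F (fun i => ((if i ∈ A then (1 : ℝ) else 0) + (if i ∈ B then 1 else 0)) / 2) =
      (F (A ∪ B) + F (A ∩ B)) / 2 := by
  set w : Fin n → ℝ :=
    fun i => ((if i ∈ A then (1 : ℝ) else 0) + (if i ∈ B then 1 else 0)) / 2 with hw
  have hval : ∀ i, w i = 0 ∨ w i = 1 / 2 ∨ w i = 1 := by
    intro i
    rw [hw]
    by_cases hA : i ∈ A <;> by_cases hB : i ∈ B <;> simp [hA, hB] <;> norm_num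
  have hnn : ∀ i, 0 ≤ w i := by
    intro i; rcases hval i with h | h | h <;> rw [h] <;> norm_num
  have hub : ∀ i, w i ≤ 1 := by
    intro i; rcases hval i with h | h | h <;> rw [h] <;> norm_num
  have h1iff : ∀ i, (1 : ℝ) ≤ w i ↔ i ∈ A ∩ B := by
    intro i
    rw [hw, Finset.mem_inter]
    by_cases hA : i ∈ A <;> by_cases hB : i ∈ B <;> simp [hA, hB] <;> norm_num
  have hhiff : ∀ i, (1 / 2 : ℝ) ≤ w i ↔ i ∈ A ∪ B := by
    intro i
    rw [hw, Finset.mem_union]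
    by_cases hA : i ∈ A <;> by_cases hB : i ∈ B <;> simp [hA, hB] <;> norm_num
  set ψ : ℝ → ℝ := fun t =>
    if t = 1 then (F (A ∪ B) + F (A ∩ B)) / 2 else if t = 1 / 2 then F (A ∪ B) / 2 else 0
    with hψ
  have hψ0 : ψ 0 = 0 := by rw [hψ]; norm_num
  have key : ∀ k ∈ Finset.range n,
      (uf w k - uf w (k + 1)) * F (Bst w (k + 1)) = ψ (uf w k) - ψ (uf w (k + 1)) := by
    intro k hkr
    rw [Finset.mem_range] at hkr
    have hk0 : uf w k = w (sp w ⟨k, hkr⟩) := dif_pos hkr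
    have vuk : uf w k = 0 ∨ uf w k = 1 / 2 ∨ uf w k = 1 := by rw [hk0]; exact hval _
    have vuk1 : uf w (k + 1) = 0 ∨ uf w (k + 1) = 1 / 2 ∨ uf w (k + 1) = 1 := by
      by_cases h : k + 1 < n
      · rw [uf, dif_pos h]; exact hval _
      · rw [uf, dif_neg h]; left; rfl
    have hle : uf w (k + 1) ≤ uf w k := by
      by_cases h : k + 1 < n
      · exact uf_anti h
      · rw [uf, dif_neg h, hk0]; exact hnn _
    have hBst : ∀ t : ℝ, t ≤ uf w k → uf w (k + 1) < t →
        Bst w (k + 1) = Finset.univ.filter (fun i => t ≤ w i) := by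
      intro t ht1 ht2
      apply Bst_filter w hkr t
      · intro j hj
        refine le_trans ht1 ?_
        rw [hk0]
        exact w_anti w (show j ≤ ⟨k, hkr⟩ from Fin.le_def.mpr hj)
      · intro j hj
        have h2 : k + 1 ≤ (j : ℕ) := hj
        have hlt : k + 1 < n := lt_of_le_of_lt h2 j.isLt
        have hle2 : w (sp w j) ≤ uf w (k + 1) := by
          rw [uf, dif_pos hlt]
          exact w_anti w (show (⟨k + 1, hlt⟩ : Fin n) ≤ j from Fin.le_def.mpr h2)
        linarith
    by_cases heq : uf w k = uf w (k + 1)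
    · rw [heq]; ring
    have hlt : uf w (k + 1) < uf w k := lt_of_le_of_ne hle (fun h => heq h.symm)
    have hfA : Finset.univ.filter (fun i => (1 : ℝ) ≤ w i) = A ∩ B := by
      ext i
      rw [Finset.mem_filter]
      simp only [Finset.mem_univ, true_and]
      exact h1iff i
    have hfU : Finset.univ.filter (fun i => (1 / 2 : ℝ) ≤ w i) = A ∪ B := by
      ext i
      rw [Finset.mem_filter]
      simp only [Finset.mem_univ, true_and]
      exact hhiff i
    rcases vuk with h0 | h0 | h0 <;> rcases vuk1 with h1 | h1 | h1 <;>
        rw [h0, h1] at hlt ⊢ <;> try linarith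
    · -- (1/2, 0)
      rw [hBst (1 / 2) (by rw [h0]) (by rw [h1]; norm_num), hfU, hψ]
      norm_num
      ring
    · -- (1, 0)
      rw [hBst 1 (by rw [h0]) (by rw [h1]; norm_num), hfA]
      have hU : A ∪ B = A ∩ B := by
        refine Finset.Subset.antisymm ?_ (Finset.inter_subset_union)
        intro i hi
        rw [← h1iff i]
        have hwi : w i = w (sp w ((sp w).symm i)) := by rw [(sp w).apply_symm_apply]
        by_cases hjk : (((sp w).symm i : Fin n) : ℕ) ≤ k
        · rw [hwi, ← h0, hk0]
          exact w_anti w (show ((sp w).symm i) ≤ ⟨k, hkr⟩ from Fin.le_def.mpr hjk)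
        · exfalso
          have h2 : k + 1 ≤ (((sp w).symm i : Fin n) : ℕ) := Nat.lt_of_not_le hjk
          have hltn : k + 1 < n := lt_of_le_of_lt h2 ((sp w).symm i).isLt
          have hle2 : w (sp w ((sp w).symm i)) ≤ uf w (k + 1) := by
            rw [uf, dif_pos hltn]
            exact w_anti w (Fin.le_def.mpr h2)
          have hmem := (hhiff i).mpr hi
          rw [← hwi] at hle2
          rw [h1] at hle2
          linarith
      rw [hψ]
      norm_num
      rw [hU]
      ring
    · -- (1, 1/2)
      rw [hBst 1 (by rw [h0]) (by rw [h1]; norm_num), hfA, hψ]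
      norm_num
      ring
  rw [lovasz_eq' hF0, Finset.sum_congr rfl key,
    Finset.sum_range_sub' (fun k => ψ (uf w k)) n, uf_top, hψ0, sub_zero]
  rcases Nat.eq_zero_or_pos n with hn | hn
  · subst hn
    have hA : A = ∅ := Finset.eq_empty_of_isEmpty A
    have hB : B = ∅ := Finset.eq_empty_of_isEmpty B
    have : uf w 0 = 0 := dif_neg (by omega)
    rw [this, hψ0, hA, hB]
    simp [hF0]
  · have hu0 : uf w 0 = w (sp w ⟨0, hn⟩) := dif_pos hn
    have hmax : ∀ i, w i ≤ uf w 0 := by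
      intro i
      rw [hu0, ← (sp w).apply_symm_apply i]
      exact w_anti w (show (⟨0, hn⟩ : Fin n) ≤ (sp w).symm i from Fin.le_def.mpr (Nat.zero_le _))
    by_cases hAB : (A ∩ B).Nonempty
    · obtain ⟨i, hi⟩ := hAB
      have hge : (1 : ℝ) ≤ uf w 0 := le_trans ((h1iff i).mpr hi) (hmax i)
      have hle1 : uf w 0 ≤ 1 := by rw [hu0]; exact hub _
      have : uf w 0 = 1 := le_antisymm hle1 hge
      rw [this, hψ]
      norm_num
    by_cases hAB2 : (A ∪ B).Nonempty
    · obtain ⟨i, hi⟩ := hAB2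
      have hge : (1 / 2 : ℝ) ≤ uf w 0 := le_trans ((hhiff i).mpr hi) (hmax i)
      have hle' : uf w 0 ≤ 1 / 2 := by
        rw [hu0]
        rcases hval (sp w ⟨0, hn⟩) with h | h | h
        · rw [h]; norm_num
        · rw [h]
        · exfalso
          have : sp w ⟨0, hn⟩ ∈ A ∩ B := (h1iff _).mp (le_of_eq h.symm)
          exact hAB ⟨_, this⟩
      have he : uf w 0 = 1 / 2 := le_antisymm hle' hge
      rw [he, hψ, Finset.not_nonempty_iff_eq_empty.mp hAB, hF0]
      norm_num
    · have hUe : A ∪ B = ∅ := Finset.not_nonempty_iff_eq_empty.mp hAB2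
      have hIe : A ∩ B = ∅ := Finset.not_nonempty_iff_eq_empty.mp hAB
      have : uf w 0 = 0 := by
        rw [hu0]
        rcases hval (sp w ⟨0, hn⟩) with h | h | h
        · exact h
        · exfalso
          have : sp w ⟨0, hn⟩ ∈ A ∪ B := (hhiff _).mp (le_of_eq h.symm)
          rw [hUe] at this; exact absurd this (Finset.notMem_empty _)
        · exfalso
          have : sp w ⟨0, hn⟩ ∈ A ∩ B := (h1iff _).mp (le_of_eq h.symm)
          rw [hIe] at this; exact absurd this (Finset.notMem_empty _)
      rw [this, hψ0, hUe, hIe, hF0]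
      ring

end LovaszAux

/-- A set function `F` with `F ∅ = 0` is submodular iff its Lovász extension is convex. -/
theorem submodular_iff_lovasz_convex {n : ℕ} (F : Finset (Fin n) → ℝ) (hF0 : F ∅ = 0) :
    Submodular F ↔ ConvexOn ℝ Set.univ (lovasz F) := by
  constructor
  · intro hsub
    refine ⟨convex_univ, ?_⟩
    intro x _ y _ a b ha hb hab
    set w : Fin n → ℝ := a • x + b • y with hw
    have hg := LovaszAux.gre_mem (F := F) (w := w) hsub hF0
    have hdot := LovaszAux.gre_dot (F := F) (w := w)
    have hsplit : ∑ i, LovaszAux.gre F w i * w i =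
        a * (∑ i, LovaszAux.gre F w i * x i) + b * (∑ i, LovaszAux.gre F w i * y i) := by
      rw [Finset.mul_sum, Finset.mul_sum, ← Finset.sum_add_distrib]
      apply Finset.sum_congr rfl
      intro i _
      simp only [hw, Pi.add_apply, Pi.smul_apply, smul_eq_mul]
      ring
    have hx := LovaszAux.dot_le_lovasz hF0 hg x
    have hy := LovaszAux.dot_le_lovasz hF0 hg y
    simp only [smul_eq_mul]
    rw [← hdot, hsplit]
    exact add_le_add (mul_le_mul_of_nonneg_left hx ha) (mul_le_mul_of_nonneg_left hy hb)
  · intro hconv A B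
    set x : Fin n → ℝ := fun i => if i ∈ A then 1 else 0 with hx
    set y : Fin n → ℝ := fun i => if i ∈ B then 1 else 0 with hy
    have h := hconv.2 (Set.mem_univ x) (Set.mem_univ y)
      (by norm_num : (0:ℝ) ≤ 1/2) (by norm_num : (0:ℝ) ≤ 1/2) (by norm_num : (1/2:ℝ) + 1/2 = 1)
    have hm : (1/2 : ℝ) • x + (1/2 : ℝ) • y =
        (fun i => ((if i ∈ A then (1 : ℝ) else 0) + (if i ∈ B then 1 else 0)) / 2) := by
      funext i
      simp only [hx, hy, Pi.add_apply, Pi.smul_apply, smul_eq_mul]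
      ring
    have e1 : lovasz F ((1/2 : ℝ) • x + (1/2 : ℝ) • y) = (F (A ∪ B) + F (A ∩ B)) / 2 := by
      rw [hm]
      exact LovaszAux.lovasz_pair hF0 A B
    have e2 : lovasz F x = F A := by
      have hxx : x = (fun i => ((if i ∈ A then (1 : ℝ) else 0) + (if i ∈ A then 1 else 0)) / 2) := by
        funext i
        by_cases h : i ∈ A <;> simp [hx, h] <;> norm_num
      rw [hxx, LovaszAux.lovasz_pair hF0 A A, Finset.union_self, Finset.inter_self]
      ring
    have e3 : lovasz F y = F B := by
      have hyy : y = (fun i => ((if i ∈ B then (1 : ℝ) else 0) + (if i ∈ B then 1 else 0)) / 2) := by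
        funext i
        by_cases h : i ∈ B <;> simp [hy, h] <;> norm_num
      rw [hyy, LovaszAux.lovasz_pair hF0 B B, Finset.union_self, Finset.inter_self]
      ring
    rw [e1, e2, e3] at h
    simp only [smul_eq_mul] at h
    linarith
end

section
/- For a submodular function F with F(∅)=0, the Lovász extension is the support function of the base polytope: for all w ∈ ℝ^n, f(w) = sup_{s ∈ B(F)} wᵀs. -/
open Finset

/-- The set of the first `m` elements in the order given by `σ`. -/
def prefSet {n : ℕ} (σ : Equiv.Perm (Fin n)) (m : ℕ) : Finset (Fin n) :=
  (univ.filter fun i : Fin n => (i : ℕ) < m).image σ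

lemma prefSet_zero {n : ℕ} (σ : Equiv.Perm (Fin n)) : prefSet σ 0 = ∅ := by
  simp [prefSet]

lemma prefSet_of_le {n : ℕ} (σ : Equiv.Perm (Fin n)) {m : ℕ} (h : n ≤ m) :
    prefSet σ m = univ := by
  have : (univ.filter fun i : Fin n => (i : ℕ) < m) = univ := by
    apply filter_true_of_mem
    intro i _
    exact lt_of_lt_of_le i.isLt h
  rw [prefSet, this]
  apply eq_univ_iff_forall.2
  intro i
  exact mem_image.2 ⟨σ.symm i, mem_univ _, σ.apply_symm_apply i⟩

lemma prefSet_succ {n : ℕ} (σ : Equiv.Perm (Fin n)) {m : ℕ} (h : m < n) :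
    prefSet σ (m + 1) = insert (σ ⟨m, h⟩) (prefSet σ m) := by
  have : (univ.filter fun i : Fin n => (i : ℕ) < m + 1)
      = insert (⟨m, h⟩ : Fin n) (univ.filter fun i : Fin n => (i : ℕ) < m) := by
    ext i
    simp only [mem_filter, mem_univ, true_and, mem_insert, Fin.ext_iff]
    omega
  rw [prefSet, this, image_insert]
  rfl

lemma sortApply_not_mem_prefSet {n : ℕ} (σ : Equiv.Perm (Fin n)) {m : ℕ} (h : m < n) :
    σ ⟨m, h⟩ ∉ prefSet σ m := by
  intro hc
  rcases mem_image.1 hc with ⟨j, hj, hje⟩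
  have hj2 : (j : ℕ) < m := by simpa using hj
  rw [σ.injective hje] at hj2
  simp at hj2

lemma Iio_image {n : ℕ} (σ : Equiv.Perm (Fin n)) (k : Fin n) :
    (Finset.Iio k).image σ = prefSet σ k := by
  rw [prefSet]
  congr 1
  ext i
  simp only [mem_Iio, mem_filter, mem_univ, true_and, Fin.lt_def]

lemma Iic_image {n : ℕ} (σ : Equiv.Perm (Fin n)) (k : Fin n) :
    (Finset.Iic k).image σ = prefSet σ (k + 1) := by
  rw [prefSet]
  congr 1
  ext i
  simp only [mem_Iic, mem_filter, mem_univ, true_and, Fin.le_def]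
  omega

lemma abel_aux (a D : ℕ → ℝ) (ha : Antitone a) (hD : ∀ k, 0 ≤ D k) (hD0 : D 0 = 0)
    (m : ℕ) : a m * D m ≤ ∑ k ∈ Finset.range m, a k * (D (k + 1) - D k) := by
  induction m with
  | zero => simp [hD0]
  | succ m ih =>
    rw [Finset.sum_range_succ]
    have h1 : a (m + 1) * D (m + 1) ≤ a m * D (m + 1) :=
      mul_le_mul_of_nonneg_right (ha (Nat.le_succ m)) (hD _)
    have h2 := mul_sub (a m) (D (m + 1)) (D m)
    linarith


/-- The greedy vector associated to a permutation. -/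
noncomputable def greedy {n : ℕ} (F : Finset (Fin n) → ℝ) (σ : Equiv.Perm (Fin n)) :
    Fin n → ℝ :=
  fun i => F (prefSet σ ((σ.symm i : ℕ) + 1)) - F (prefSet σ (σ.symm i : ℕ))

lemma greedy_reindex {n : ℕ} (F : Finset (Fin n) → ℝ) (σ : Equiv.Perm (Fin n))
    (w : Fin n → ℝ) :
    ∑ i, w i * greedy F σ i
      = ∑ k : Fin n, w (σ k) * (F (prefSet σ ((k : ℕ) + 1)) - F (prefSet σ (k : ℕ))) := by
  rw [← Equiv.sum_comp σ (fun i => w i * greedy F σ i)]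
  apply Finset.sum_congr rfl
  intro k _
  simp [greedy]

lemma greedy_mem {n : ℕ} (F : Finset (Fin n) → ℝ) (σ : Equiv.Perm (Fin n))
    (hF : Submodular F) (hF0 : F ∅ = 0) : greedy F σ ∈ basePolytope F := by
  constructor
  · have h1 : ∑ i, greedy F σ i
        = ∑ k : Fin n, (F (prefSet σ ((k : ℕ) + 1)) - F (prefSet σ (k : ℕ))) := by
      rw [← Equiv.sum_comp σ (fun i => greedy F σ i)]
      apply Finset.sum_congr rfl
      intro k _
      simp [greedy]
    rw [h1, Fin.sum_univ_eq_sum_range (fun m => F (prefSet σ (m + 1)) - F (prefSet σ m)) n,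
      Finset.sum_range_sub (fun m => F (prefSet σ m)) n, prefSet_of_le σ le_rfl,
      prefSet_zero, hF0, sub_zero]
  · intro A
    have key : ∀ m, ∑ i ∈ A ∩ prefSet σ m, greedy F σ i ≤ F (A ∩ prefSet σ m) := by
      intro m
      induction m with
      | zero => simp [prefSet_zero, hF0]
      | succ m ih =>
        by_cases hm : m < n
        · have hET := sortApply_not_mem_prefSet σ hm
          rw [prefSet_succ σ hm]
          by_cases he : σ ⟨m, hm⟩ ∈ A
          · have hnotmem : σ ⟨m, hm⟩ ∉ A ∩ prefSet σ m := by
              simp [hET]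
            have hins : A ∩ insert (σ ⟨m, hm⟩) (prefSet σ m)
                = insert (σ ⟨m, hm⟩) (A ∩ prefSet σ m) := by
              ext i
              simp only [mem_inter, mem_insert]
              constructor
              · rintro ⟨hA, h | hT⟩
                · exact Or.inl h
                · exact Or.inr ⟨hA, hT⟩
              · rintro (h | ⟨hA, hT⟩)
                · subst h
                  exact ⟨he, Or.inl rfl⟩
                · exact ⟨hA, Or.inr hT⟩
            rw [hins, Finset.sum_insert hnotmem]
            have hval : greedy F σ (σ ⟨m, hm⟩)
                = F (prefSet σ (m + 1)) - F (prefSet σ m) := by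
              simp [greedy]
            have hsub := hF (insert (σ ⟨m, hm⟩) (A ∩ prefSet σ m)) (prefSet σ m)
            have hu : insert (σ ⟨m, hm⟩) (A ∩ prefSet σ m) ∪ prefSet σ m
                = prefSet σ (m + 1) := by
              rw [prefSet_succ σ hm]
              ext i
              simp only [mem_union, mem_insert, mem_inter]
              tauto
            have hi : insert (σ ⟨m, hm⟩) (A ∩ prefSet σ m) ∩ prefSet σ m
                = A ∩ prefSet σ m := by
              ext i
              simp only [mem_inter, mem_insert]
              constructor
              · rintro ⟨h | h, hT⟩
                · exact absurd (h ▸ hT) hET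
                · exact h
              · intro h
                exact ⟨Or.inr h, h.2⟩
            rw [hu, hi] at hsub
            rw [← prefSet_succ σ hm] at *
            linarith
          · have heq : A ∩ insert (σ ⟨m, hm⟩) (prefSet σ m) = A ∩ prefSet σ m := by
              ext i
              simp only [mem_inter, mem_insert]
              constructor
              · rintro ⟨hA, h | hT⟩
                · exact absurd (h ▸ hA) he
                · exact ⟨hA, hT⟩
              · intro h
                exact ⟨h.1, Or.inr h.2⟩
            rw [heq]
            exact ih
        · have heq : prefSet σ (m + 1) = prefSet σ m := by
            rw [prefSet_of_le σ (by omega), prefSet_of_le σ (by omega)]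
          rw [heq]
          exact ih
    have h := key n
    rwa [prefSet_of_le σ le_rfl, inter_univ] at h
/-- The Lovász extension is the support function of the base polytope. -/
theorem lovasz_eq_sSup_basePolytope {n : ℕ} (F : Finset (Fin n) → ℝ)
    (hF : Submodular F) (hF0 : F ∅ = 0) (w : Fin n → ℝ) :
    lovasz F w = sSup ((fun s : Fin n → ℝ => ∑ i, w i * s i) '' basePolytope F) := by
  set σ := Tuple.sort (fun i => -w i) with hσ
  have hlov : lovasz F w
      = ∑ k : Fin n, w (σ k) * (F (prefSet σ ((k : ℕ) + 1)) - F (prefSet σ (k : ℕ))) := by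
    simp only [lovasz, ← hσ]
    apply Finset.sum_congr rfl
    intro k _
    rw [Iic_image, Iio_image]
  symm
  apply IsGreatest.csSup_eq
  constructor
  · exact ⟨greedy F σ, greedy_mem F σ hF hF0, by show ∑ i, w i * greedy F σ i = lovasz F w; rw [greedy_reindex, ← hlov]⟩
  · rintro x ⟨s, hs, rfl⟩
    show ∑ i, w i * s i ≤ lovasz F w
    rcases Nat.eq_zero_or_pos n with hn | hn
    · subst hn
      rw [hlov]
      simp
    · set a : ℕ → ℝ := fun m => w (σ ⟨min m (n - 1), by omega⟩) with haDef
      have haval : ∀ k : Fin n, a (k : ℕ) = w (σ k) := by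
        intro k
        have hmin : (⟨min (k : ℕ) (n - 1), by omega⟩ : Fin n) = k := by
          apply Fin.ext
          simp only []
          omega
        simp only [haDef, hmin]
      have hanti : Antitone a := by
        intro m m' hmm
        have hmono := Tuple.monotone_sort (fun i => -w i)
        rw [← hσ] at hmono
        have hle : (⟨min m (n - 1), by omega⟩ : Fin n) ≤ ⟨min m' (n - 1), by omega⟩ := by
          simp only [Fin.mk_le_mk]
          omega
        have h2 := hmono hle
        simp only [Function.comp_apply, neg_le_neg_iff] at h2
        simp only [haDef]
        exact h2
      set D : ℕ → ℝ := fun m => F (prefSet σ m) - ∑ i ∈ prefSet σ m, s i with hDdef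
      have hD : ∀ k, 0 ≤ D k := fun k => sub_nonneg.2 (hs.2 _)
      have hD0 : D 0 = 0 := by
        simp [hDdef, prefSet_zero, hF0]
      have hDn : D n = 0 := by
        simp only [hDdef, prefSet_of_le σ le_rfl]
        rw [hs.1, sub_self]
      have hws : ∑ i, w i * s i
          = ∑ m ∈ Finset.range n,
              a m * (∑ i ∈ prefSet σ (m + 1), s i - ∑ i ∈ prefSet σ m, s i) := by
        rw [← Equiv.sum_comp σ (fun i => w i * s i),
          ← Fin.sum_univ_eq_sum_range
            (fun m => a m * (∑ i ∈ prefSet σ (m + 1), s i - ∑ i ∈ prefSet σ m, s i)) n]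
        apply Finset.sum_congr rfl
        intro k _
        rw [haval, prefSet_succ σ k.isLt,
          Finset.sum_insert (sortApply_not_mem_prefSet σ k.isLt)]
        simp only [Fin.eta]
        ring
      have hlov' : lovasz F w
          = ∑ m ∈ Finset.range n, a m * (F (prefSet σ (m + 1)) - F (prefSet σ m)) := by
        rw [hlov, ← Fin.sum_univ_eq_sum_range
          (fun m => a m * (F (prefSet σ (m + 1)) - F (prefSet σ m))) n]
        exact Finset.sum_congr rfl fun k _ => by rw [haval]
      have habel := abel_aux a D hanti hD hD0 n
      rw [hDn, mul_zero] at habel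
      have hsplit : ∑ m ∈ Finset.range n, a m * (D (m + 1) - D m)
          = (∑ m ∈ Finset.range n, a m * (F (prefSet σ (m + 1)) - F (prefSet σ m)))
            - ∑ m ∈ Finset.range n,
                a m * (∑ i ∈ prefSet σ (m + 1), s i - ∑ i ∈ prefSet σ m, s i) := by
        rw [← Finset.sum_sub_distrib]
        apply Finset.sum_congr rfl
        intro m _
        simp only [hDdef]
        ring
      rw [hws, hlov']
      linarith [habel, hsplit]
end

section
/- The greedy algorithm output lies in the base polytope and attains the Lovász extension value: if σ is a permutation of V such that w_{σ(1)} ≥ ... ≥ w_{σ(n)} and s_{σ(k)} = F({σ(1),...,σ(k)}) − F({σ(1),...,σ(k−1)}), then s ∈ B(F) and wᵀs = f(w). -/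
open Finset

namespace GreedyAux

variable {n : ℕ}

/-- The image under `σ` of the first `m` indices. -/
def prefixSet (σ : Equiv.Perm (Fin n)) (m : ℕ) : Finset (Fin n) :=
  (Finset.univ.filter (fun j : Fin n => (j : ℕ) < m)).image σ

lemma mem_prefixSet {σ : Equiv.Perm (Fin n)} {m : ℕ} {x : Fin n} :
    x ∈ prefixSet σ m ↔ ((σ.symm x : Fin n) : ℕ) < m := by
  simp only [prefixSet, Finset.mem_image, Finset.mem_filter, Finset.mem_univ, true_and]
  constructor
  · rintro ⟨j, hj, rfl⟩; simpa using hj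
  · intro h; exact ⟨σ.symm x, h, σ.apply_symm_apply x⟩

lemma prefixSet_zero (σ : Equiv.Perm (Fin n)) : prefixSet σ 0 = ∅ := by
  ext x; simp [mem_prefixSet]

lemma prefixSet_of_le (σ : Equiv.Perm (Fin n)) {m : ℕ} (h : n ≤ m) :
    prefixSet σ m = Finset.univ := by
  ext x; simp [mem_prefixSet, lt_of_lt_of_le (σ.symm x).isLt h]

lemma notMem_prefixSet (σ : Equiv.Perm (Fin n)) {m : ℕ} (hm : m < n) :
    σ ⟨m, hm⟩ ∉ prefixSet σ m := by
  simp [mem_prefixSet]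

lemma prefixSet_succ (σ : Equiv.Perm (Fin n)) {m : ℕ} (hm : m < n) :
    prefixSet σ (m + 1) = insert (σ ⟨m, hm⟩) (prefixSet σ m) := by
  ext x
  simp only [mem_prefixSet, Finset.mem_insert]
  constructor
  · intro h
    rcases Nat.lt_succ_iff_lt_or_eq.mp h with h' | h'
    · exact Or.inr h'
    · left
      have : σ.symm x = ⟨m, hm⟩ := Fin.ext h'
      rw [← this, σ.apply_symm_apply]
  · rintro (rfl | h)
    · simp
    · exact Nat.lt_succ_of_lt h

lemma image_Iio (σ : Equiv.Perm (Fin n)) (k : Fin n) :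
    (Finset.Iio k).image σ = prefixSet σ (k : ℕ) := by
  unfold prefixSet
  congr 1
  ext j
  simp only [Finset.mem_Iio, Finset.mem_filter, Finset.mem_univ, true_and, Fin.lt_def]

lemma image_Iic (σ : Equiv.Perm (Fin n)) (k : Fin n) :
    (Finset.Iic k).image σ = prefixSet σ ((k : ℕ) + 1) := by
  unfold prefixSet
  congr 1
  ext j
  simp only [Finset.mem_Iic, Finset.mem_filter, Finset.mem_univ, true_and, Fin.le_def,
    Nat.lt_succ_iff]

/-- Value of `w ∘ σ` extended by zero. -/
noncomputable def aval (w : Fin n → ℝ) (σ : Equiv.Perm (Fin n)) (k : ℕ) : ℝ :=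
  if h : k < n then w (σ ⟨k, h⟩) else 0

lemma abel_sum (a G : ℕ → ℝ) (hG0 : G 0 = 0) (han : a n = 0) :
    ∑ k ∈ Finset.range n, a k * (G (k + 1) - G k)
      = ∑ k ∈ Finset.range n, (a k - a (k + 1)) * G (k + 1) := by
  have h1 : ∑ k ∈ Finset.range n, (a (k+1) * G (k+1) - a k * G k)
      = a n * G n - a 0 * G 0 := Finset.sum_range_sub (fun k => a k * G k) n
  have h2 : ∑ k ∈ Finset.range n, a k * (G (k + 1) - G k)
      = ∑ k ∈ Finset.range n, ((a k - a (k + 1)) * G (k + 1)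
          + (a (k+1) * G (k+1) - a k * G k)) := by
    apply Finset.sum_congr rfl; intro k _; ring
  rw [h2, Finset.sum_add_distrib, h1, hG0, han]
  ring

lemma sum_eq (F : Finset (Fin n) → ℝ) (hF0 : F ∅ = 0) (w : Fin n → ℝ)
    (σ : Equiv.Perm (Fin n)) :
    (∑ k : Fin n, w (σ k) *
        (F ((Finset.Iic k).image σ) - F ((Finset.Iio k).image σ)))
      = ∑ k ∈ Finset.range n,
          (aval w σ k - aval w σ (k + 1)) * F (prefixSet σ (k + 1)) := by
  have h1 : ∀ k : Fin n, w (σ k) *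
        (F ((Finset.Iic k).image σ) - F ((Finset.Iio k).image σ))
      = aval w σ (k : ℕ) * (F (prefixSet σ ((k : ℕ) + 1)) - F (prefixSet σ (k : ℕ))) := by
    intro k
    rw [image_Iic, image_Iio, aval, dif_pos k.isLt]
  calc (∑ k : Fin n, w (σ k) *
        (F ((Finset.Iic k).image σ) - F ((Finset.Iio k).image σ)))
      = ∑ k : Fin n, aval w σ (k : ℕ) *
          (F (prefixSet σ ((k : ℕ) + 1)) - F (prefixSet σ (k : ℕ))) := by
        exact Finset.sum_congr rfl fun k _ => h1 k
    _ = ∑ k ∈ Finset.range n, aval w σ k *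
          (F (prefixSet σ (k + 1)) - F (prefixSet σ k)) :=
        Fin.sum_univ_eq_sum_range
          (fun m => aval w σ m * (F (prefixSet σ (m + 1)) - F (prefixSet σ m))) n
    _ = _ := by
        apply abel_sum (aval w σ) (fun m => F (prefixSet σ m))
        · rw [prefixSet_zero]; exact hF0
        · simp [aval]

lemma prefixSet_eq_filter (w : Fin n → ℝ) (σ : Equiv.Perm (Fin n))
    (hσ : ∀ j k : Fin n, j ≤ k → w (σ k) ≤ w (σ j)) {k : ℕ} (hk1 : k + 1 < n)
    (hlt : w (σ ⟨k + 1, hk1⟩) < w (σ ⟨k, Nat.lt_of_succ_lt hk1⟩)) :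
    prefixSet σ (k + 1)
      = Finset.univ.filter (fun x => w (σ ⟨k, Nat.lt_of_succ_lt hk1⟩) ≤ w x) := by
  ext x
  simp only [mem_prefixSet, Finset.mem_filter, Finset.mem_univ, true_and]
  constructor
  · intro h
    have hle : σ.symm x ≤ ⟨k, Nat.lt_of_succ_lt hk1⟩ := by
      simpa [Fin.le_def] using Nat.lt_succ_iff.mp h
    have := hσ _ _ hle
    simpa using this
  · intro h
    by_contra hcon
    push_neg at hcon
    have hle : (⟨k + 1, hk1⟩ : Fin n) ≤ σ.symm x := by
      simpa [Fin.le_def] using hcon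
    have := hσ _ _ hle
    rw [σ.apply_symm_apply] at this
    exact absurd (le_trans h this) (not_le.mpr hlt)

end GreedyAux

open GreedyAux in
/-- The greedy algorithm output lies in the base polytope and attains the Lovász
extension value. -/
theorem greedy_mem_basePolytope_and_attains {n : ℕ} (F : Finset (Fin n) → ℝ)
    (hF : Submodular F) (hF0 : F ∅ = 0) (w : Fin n → ℝ)
    (σ : Equiv.Perm (Fin n)) (hσ : ∀ j k : Fin n, j ≤ k → w (σ k) ≤ w (σ j))
    (s : Fin n → ℝ)
    (hs : ∀ k : Fin n,
      s (σ k) = F ((Finset.Iic k).image σ) - F ((Finset.Iio k).image σ)) :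
    s ∈ basePolytope F ∧ (∑ i, w i * s i) = lovasz F w := by
  have hsval : ∀ k : Fin n,
      s (σ k) = F (prefixSet σ ((k : ℕ) + 1)) - F (prefixSet σ (k : ℕ)) := by
    intro k; rw [hs k, image_Iic, image_Iio]
  constructor
  · constructor
    · -- total sum
      calc (∑ i, s i) = ∑ k : Fin n, s (σ k) := (Equiv.sum_comp σ s).symm
        _ = ∑ k : Fin n, (F (prefixSet σ ((k : ℕ) + 1)) - F (prefixSet σ (k : ℕ))) :=
            Finset.sum_congr rfl fun k _ => hsval k
        _ = ∑ k ∈ Finset.range n, (F (prefixSet σ (k + 1)) - F (prefixSet σ k)) :=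
            Fin.sum_univ_eq_sum_range
              (fun m => F (prefixSet σ (m + 1)) - F (prefixSet σ m)) n
        _ = F (prefixSet σ n) - F (prefixSet σ 0) :=
            Finset.sum_range_sub (fun m => F (prefixSet σ m)) n
        _ = F Finset.univ := by rw [prefixSet_of_le σ le_rfl, prefixSet_zero, hF0, sub_zero]
    · -- subadditivity on each A
      intro A
      have key : ∀ m : ℕ, (∑ i ∈ A ∩ prefixSet σ m, s i) ≤ F (A ∩ prefixSet σ m) := by
        intro m
        induction m with
        | zero => simp [prefixSet_zero, hF0]
        | succ m ih =>
          by_cases hm : m < n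
          · by_cases hx : σ ⟨m, hm⟩ ∈ A
            · have hins : A ∩ prefixSet σ (m + 1)
                  = insert (σ ⟨m, hm⟩) (A ∩ prefixSet σ m) := by
                rw [prefixSet_succ σ hm, Finset.inter_insert_of_mem hx]
              have hnot : σ ⟨m, hm⟩ ∉ A ∩ prefixSet σ m := by
                simp [notMem_prefixSet σ hm]
              have hsum : (∑ i ∈ A ∩ prefixSet σ (m + 1), s i)
                  = s (σ ⟨m, hm⟩) + ∑ i ∈ A ∩ prefixSet σ m, s i := by
                rw [hins, Finset.sum_insert hnot]
              have hsv : s (σ ⟨m, hm⟩)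
                  = F (prefixSet σ (m + 1)) - F (prefixSet σ m) := hsval ⟨m, hm⟩
              have hsub := hF (A ∩ prefixSet σ (m + 1)) (prefixSet σ m)
              have hUnion : (A ∩ prefixSet σ (m + 1)) ∪ prefixSet σ m
                  = prefixSet σ (m + 1) := by
                rw [hins, Finset.insert_union,
                  Finset.union_eq_right.mpr (Finset.inter_subset_right),
                  ← prefixSet_succ σ hm]
              have hInter : (A ∩ prefixSet σ (m + 1)) ∩ prefixSet σ m
                  = A ∩ prefixSet σ m := by
                rw [hins, Finset.insert_inter_of_notMem (notMem_prefixSet σ hm),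
                  Finset.inter_assoc, Finset.inter_self]
              rw [hUnion, hInter] at hsub
              rw [hsum, hsv]
              linarith
            · have : A ∩ prefixSet σ (m + 1) = A ∩ prefixSet σ m := by
                rw [prefixSet_succ σ hm, Finset.inter_insert_of_notMem hx]
              rw [this]; exact ih
          · have : prefixSet σ (m + 1) = prefixSet σ m := by
              rw [prefixSet_of_le σ (Nat.le_of_not_lt hm),
                prefixSet_of_le σ (Nat.le_of_succ_le (Nat.succ_le_of_lt (Nat.lt_succ_of_le (Nat.le_of_not_lt hm))))]
            rw [this]; exact ih
      have := key n
      rwa [prefixSet_of_le σ le_rfl, Finset.inter_univ] at this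
  · -- Lovász value
    set τ : Equiv.Perm (Fin n) := Tuple.sort (fun i => -w i) with hτdef
    have hτmono : Monotone ((fun i => -w i) ∘ τ) := Tuple.monotone_sort _
    have hτ : ∀ j k : Fin n, j ≤ k → w (τ k) ≤ w (τ j) := by
      intro j k h
      have := hτmono h
      simpa using this
    have hws : ∀ k : Fin n, w (σ k) = w (τ k) := by
      have hmono : Monotone ((fun i => -w i) ∘ σ) := by
        intro j k h
        simpa using hσ j k h
      have := (Tuple.comp_sort_eq_comp_iff_monotone (f := fun i => -w i)
        (σ := σ)).mpr hmono
      intro k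
      have := congrFun this k
      simpa using this
    have haval : ∀ k : ℕ, aval w σ k = aval w τ k := by
      intro k
      unfold aval
      split
      · exact hws _
      · rfl
    have hlhs : (∑ i, w i * s i)
        = ∑ k ∈ Finset.range n,
            (aval w σ k - aval w σ (k + 1)) * F (prefixSet σ (k + 1)) := by
      calc (∑ i, w i * s i) = ∑ k : Fin n, w (σ k) * s (σ k) :=
            (Equiv.sum_comp σ (fun i => w i * s i)).symm
        _ = ∑ k : Fin n, w (σ k) *
              (F ((Finset.Iic k).image σ) - F ((Finset.Iio k).image σ)) :=
            Finset.sum_congr rfl fun k _ => by rw [hs k]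
        _ = _ := sum_eq F hF0 w σ
    have hrhs : lovasz F w
        = ∑ k ∈ Finset.range n,
            (aval w τ k - aval w τ (k + 1)) * F (prefixSet τ (k + 1)) := by
      unfold lovasz
      exact sum_eq F hF0 w τ
    rw [hlhs, hrhs]
    apply Finset.sum_congr rfl
    intro k hk
    have hkn : k < n := Finset.mem_range.mp hk
    rw [← haval k, ← haval (k + 1)]
    by_cases hk1 : k + 1 < n
    · by_cases hc : aval w σ k = aval w σ (k + 1)
      · rw [hc, sub_self, zero_mul, zero_mul]
      · have hak : aval w σ k = w (σ ⟨k, hkn⟩) := dif_pos hkn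
        have hak1 : aval w σ (k + 1) = w (σ ⟨k + 1, hk1⟩) := dif_pos hk1
        have hleσ : w (σ ⟨k + 1, hk1⟩) ≤ w (σ ⟨k, hkn⟩) := by
          apply hσ
          simp [Fin.le_def]
        have hltσ : w (σ ⟨k + 1, hk1⟩) < w (σ ⟨k, hkn⟩) := by
          rcases lt_or_eq_of_le hleσ with h | h
          · exact h
          · exact absurd (by rw [hak, hak1, h]) hc
        have hltτ : w (τ ⟨k + 1, hk1⟩) < w (τ ⟨k, hkn⟩) := by
          rw [← hws ⟨k + 1, hk1⟩, ← hws ⟨k, hkn⟩]; exact hltσ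
        have e1 := prefixSet_eq_filter w σ hσ hk1 hltσ
        have e2 := prefixSet_eq_filter w τ hτ hk1 hltτ
        rw [e1, e2, hws ⟨k, hkn⟩]
    · have hkn1 : k + 1 = n := by omega
      rw [prefixSet_of_le σ (le_of_eq hkn1.symm), prefixSet_of_le τ (le_of_eq hkn1.symm)]
end

section
/- Minimizing a submodular function equals minimizing its Lovász extension over the hypercube: min_{A ⊆ V} F(A) − u(A) = min_{w ∈ [0,1]^n} f(w) − uᵀw. -/
open Finset

/- ### Auxiliary definitions and lemmas -/

/-- The image under `σ` of the first `m` indices. -/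
def segSet {n : ℕ} (σ : Equiv.Perm (Fin n)) (m : ℕ) : Finset (Fin n) :=
  (Finset.univ.filter fun j : Fin n => (j : ℕ) < m).image σ

lemma segSet_zero {n : ℕ} (σ : Equiv.Perm (Fin n)) : segSet σ 0 = ∅ := by
  simp [segSet]

lemma segSet_Iic {n : ℕ} (σ : Equiv.Perm (Fin n)) (k : Fin n) :
    (Finset.Iic k).image σ = segSet σ ((k : ℕ) + 1) := by
  unfold segSet
  congr 1
  ext j
  simp only [Finset.mem_Iic, Finset.mem_filter, Finset.mem_univ, true_and, Fin.le_def,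
    Nat.lt_succ_iff]

lemma segSet_Iio {n : ℕ} (σ : Equiv.Perm (Fin n)) (k : Fin n) :
    (Finset.Iio k).image σ = segSet σ (k : ℕ) := by
  unfold segSet
  congr 1
  ext j
  simp only [Finset.mem_Iio, Finset.mem_filter, Finset.mem_univ, true_and, Fin.lt_def]

lemma segSet_succ {n : ℕ} (σ : Equiv.Perm (Fin n)) (k : Fin n) :
    segSet σ ((k : ℕ) + 1) = insert (σ k) (segSet σ (k : ℕ)) := by
  unfold segSet
  have : (Finset.univ.filter fun j : Fin n => (j : ℕ) < (k : ℕ) + 1)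
      = insert k (Finset.univ.filter fun j : Fin n => (j : ℕ) < (k : ℕ)) := by
    ext j
    simp only [Finset.mem_filter, Finset.mem_univ, true_and, Finset.mem_insert, ← Fin.val_eq_val]
    omega
  rw [this, Finset.image_insert]

lemma not_mem_segSet {n : ℕ} (σ : Equiv.Perm (Fin n)) (k : Fin n) :
    σ k ∉ segSet σ (k : ℕ) := by
  unfold segSet
  simp only [Finset.mem_image, Finset.mem_filter, Finset.mem_univ, true_and]
  rintro ⟨j, hj, hje⟩
  have := σ.injective hje
  omega

/-- The partial values `F (segSet σ m) - u (segSet σ m)`. -/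
noncomputable def Gm {n : ℕ} (F : Finset (Fin n) → ℝ) (u : Fin n → ℝ)
    (σ : Equiv.Perm (Fin n)) (m : ℕ) : ℝ :=
  F (segSet σ m) - ∑ i ∈ segSet σ m, u i

/-- The sorted values of `w`, as a function on `ℕ`. -/
noncomputable def vv {n : ℕ} (w : Fin n → ℝ) (k : ℕ) : ℝ :=
  if h : k < n then w (Tuple.sort (fun i => -w i) ⟨k, h⟩) else 0

lemma lovasz_sub_eq {n : ℕ} (F : Finset (Fin n) → ℝ) (u w : Fin n → ℝ) :
    lovasz F w - ∑ i, u i * w i =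
    ∑ k ∈ Finset.range n, vv w k *
      (Gm F u (Tuple.sort (fun i => -w i)) (k + 1) - Gm F u (Tuple.sort (fun i => -w i)) k) := by
  set σ := Tuple.sort (fun i => -w i) with hσ
  have h1 : lovasz F w = ∑ k : Fin n, w (σ k) *
      (F (segSet σ ((k : ℕ) + 1)) - F (segSet σ (k : ℕ))) := by
    unfold lovasz
    simp_rw [← hσ, segSet_Iic, segSet_Iio]
  have h2 : ∑ i, u i * w i = ∑ k : Fin n, u (σ k) * w (σ k) :=
    (Equiv.sum_comp σ (fun i => u i * w i)).symm
  have h3 : ∀ k : Fin n, Gm F u σ ((k : ℕ) + 1) - Gm F u σ (k : ℕ) =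
      (F (segSet σ ((k : ℕ) + 1)) - F (segSet σ (k : ℕ))) - u (σ k) := by
    intro k
    unfold Gm
    rw [segSet_succ, Finset.sum_insert (not_mem_segSet σ k)]
    ring
  have h4 : lovasz F w - ∑ i, u i * w i =
      ∑ k : Fin n, w (σ k) * (Gm F u σ ((k : ℕ) + 1) - Gm F u σ (k : ℕ)) := by
    rw [h1, h2, ← Finset.sum_sub_distrib]
    refine Finset.sum_congr rfl fun k _ => ?_
    rw [h3]
    ring
  rw [h4]
  rw [← Fin.sum_univ_eq_sum_range (fun k => vv w k * (Gm F u σ (k + 1) - Gm F u σ k)) n]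
  refine Finset.sum_congr rfl fun k _ => ?_
  congr 1
  unfold vv
  rw [dif_pos k.isLt, ← hσ, Fin.eta]

/-- Summation-by-parts lower bound. -/
lemma key_bound (G v : ℕ → ℝ) (m : ℝ) (n : ℕ)
    (hG0 : G 0 = 0) (hGm : ∀ k, m ≤ G k) (hm0 : m ≤ 0)
    (hv0 : ∀ k, 0 ≤ v k) (hv1 : v 0 ≤ 1)
    (hanti : ∀ i, i + 1 < n → v (i + 1) ≤ v i) :
    m ≤ ∑ k ∈ Finset.range n, v k * (G (k + 1) - G k) := by
  rcases Nat.eq_zero_or_pos n with hn | hn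
  · simpa [hn] using hm0
  have hby := Finset.sum_range_by_parts v (fun k => G (k + 1) - G k) n
  simp only [smul_eq_mul] at hby
  have htel : ∀ M : ℕ, (∑ j ∈ Finset.range M, (G (j + 1) - G j)) = G M := by
    intro M
    rw [Finset.sum_range_sub G, hG0, sub_zero]
  rw [htel n] at hby; rw [hby]
  have h1 : m * v 0 ≤ v (n - 1) * G n -
      ∑ i ∈ Finset.range (n - 1), (v (i + 1) - v i) * (∑ j ∈ Finset.range (i+1), (G (j+1) - G j)) := by
    have e1 : ∀ i ∈ Finset.range (n-1),
        (v (i + 1) - v i) * (∑ j ∈ Finset.range (i+1), (G (j+1) - G j)) ≤ (v i - v (i+1)) * (-m) := by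
      intro i hi
      rw [htel]
      have hii : i + 1 < n := by
        have := Finset.mem_range.1 hi; omega
      have hcoef : 0 ≤ v i - v (i + 1) := sub_nonneg.2 (hanti i hii)
      have := mul_le_mul_of_nonneg_left (hGm (i+1)) hcoef
      nlinarith [hGm (i+1)]
    have e2 : ∑ i ∈ Finset.range (n-1), (v (i + 1) - v i) * (∑ j ∈ Finset.range (i+1), (G (j+1) - G j))
        ≤ ∑ i ∈ Finset.range (n-1), (v i - v (i+1)) * (-m) := Finset.sum_le_sum e1
    have e3 : ∑ i ∈ Finset.range (n-1), (v i - v (i+1)) * (-m) = (v 0 - v (n-1)) * (-m) := by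
      rw [← Finset.sum_mul, Finset.sum_range_sub' v]
    have e4 : m * v (n-1) ≤ v (n-1) * G n := by
      rw [mul_comm]
      exact mul_le_mul_of_nonneg_left (hGm n) (hv0 (n-1))
    nlinarith [e2, e3, e4]
  have h2 : m ≤ m * v 0 := by
    nlinarith [hv0 0]
  linarith

lemma sort_antitone {n : ℕ} (w : Fin n → ℝ) :
    Antitone (fun k => w (Tuple.sort (fun i => -w i) k)) := by
  intro j k hjk
  have := Tuple.monotone_sort (fun i => -w i) hjk
  simpa using this

lemma lovasz_indicator {n : ℕ} (F : Finset (Fin n) → ℝ) (hF0 : F ∅ = 0)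
    (A : Finset (Fin n)) :
    lovasz F (fun i => if i ∈ A then (1 : ℝ) else 0) = F A := by
  set w : Fin n → ℝ := fun i => if i ∈ A then (1 : ℝ) else 0 with hw
  set σ := Tuple.sort (fun i => -w i) with hσ
  set a := A.card with ha
  have han : a ≤ n := by
    have := Finset.card_le_univ A
    simpa using this
  have hval : ∀ i, w i = 0 ∨ w i = 1 := by
    intro i
    by_cases h : i ∈ A <;> simp [hw, h]
  have hanti : Antitone (fun k => w (σ k)) := sort_antitone w
  set S := Finset.univ.filter (fun k => w (σ k) = 1) with hS
  have himg : S.image σ = A := by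
    ext i
    simp only [hS, Finset.mem_image, Finset.mem_filter, Finset.mem_univ, true_and]
    constructor
    · rintro ⟨k, hk1, rfl⟩
      by_contra h
      simp [hw, h] at hk1
    · intro hi
      exact ⟨σ.symm i, by simp [hw, hi], by simp⟩
  have hcard : S.card = a := by
    rw [ha, ← himg, Finset.card_image_of_injective _ σ.injective]
  have hmem : ∀ k : Fin n, k ∈ S ↔ (k : ℕ) < a := by
    intro k
    constructor
    · intro hk
      have hsub : Finset.Iic k ⊆ S := by
        intro j hj
        simp only [Finset.mem_Iic] at hj
        simp only [hS, Finset.mem_filter, Finset.mem_univ, true_and] at hk ⊢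
        have h1 : w (σ k) ≤ w (σ j) := hanti hj
        rcases hval (σ j) with h | h
        · rw [hk] at h1; rw [h] at h1; linarith
        · exact h
      have := Finset.card_le_card hsub
      rw [Fin.card_Iic, hcard] at this
      omega
    · intro hk
      by_contra hns
      have hsub : S ⊆ Finset.Iio k := by
        intro j hj
        simp only [Finset.mem_Iio]
        by_contra hnot
        push_neg at hnot
        have : k ∈ S := by
          simp only [hS, Finset.mem_filter, Finset.mem_univ, true_and] at hj ⊢
          have h1 : w (σ j) ≤ w (σ k) := hanti hnot
          rcases hval (σ k) with h | h
          · rw [hj] at h1; rw [h] at h1; linarith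
          · exact h
        exact hns this
      have := Finset.card_le_card hsub
      rw [Fin.card_Iio, hcard] at this
      omega
  have hvv : ∀ k : ℕ, vv w k = if k < a then 1 else 0 := by
    intro k
    unfold vv
    by_cases h : k < n
    · rw [dif_pos h, ← hσ]
      by_cases hka : k < a
      · have : (⟨k, h⟩ : Fin n) ∈ S := (hmem _).2 hka
        simp only [hS, Finset.mem_filter, Finset.mem_univ, true_and] at this
        rw [this, if_pos hka]
      · have hns : (⟨k, h⟩ : Fin n) ∉ S := fun hc => hka ((hmem _).1 hc)
        simp only [hS, Finset.mem_filter, Finset.mem_univ, true_and] at hns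
        rcases hval (σ ⟨k, h⟩) with h0 | h1
        · rw [h0, if_neg hka]
        · exact absurd h1 hns
    · rw [dif_neg h, if_neg (by omega)]
  have hseg : segSet σ a = A := by
    have : (Finset.univ.filter fun j : Fin n => (j : ℕ) < a) = S := by
      ext j
      simp only [Finset.mem_filter, Finset.mem_univ, true_and, hmem]
    rw [segSet, this, himg]
  have key := lovasz_sub_eq F (fun _ => 0) w
  simp only [zero_mul, Finset.sum_const_zero, sub_zero] at key
  rw [key]
  have hGm : ∀ m, Gm F (fun _ => (0:ℝ)) σ m = F (segSet σ m) := by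
    intro m; unfold Gm; simp
  have : ∀ k ∈ Finset.range n, vv w k *
      (Gm F (fun _ => (0:ℝ)) σ (k+1) - Gm F (fun _ => (0:ℝ)) σ k)
      = if k < a then F (segSet σ (k+1)) - F (segSet σ k) else 0 := by
    intro k _
    rw [hvv k, hGm, hGm, ite_mul, one_mul, zero_mul]
  rw [Finset.sum_congr rfl this, ← Finset.sum_filter]
  have hfil : (Finset.range n).filter (· < a) = Finset.range a := by
    ext j
    simp only [Finset.mem_filter, Finset.mem_range]
    omega
  rw [hfil, Finset.sum_range_sub (fun m => F (segSet σ m)), hseg, segSet_zero, hF0, sub_zero]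

/-- Minimizing a submodular function (with a modular term) equals minimizing its
Lovász extension over the hypercube. -/
theorem sfm_eq_min_lovasz_hypercube {n : ℕ} (F : Finset (Fin n) → ℝ)
    (hF : Submodular F) (hF0 : F ∅ = 0) (u : Fin n → ℝ) :
    (Finset.univ.powerset.inf' ⟨∅, by simp⟩
        (fun A : Finset (Fin n) => F A - ∑ i ∈ A, u i))
      = sInf {x : ℝ | ∃ w : Fin n → ℝ, (∀ i, w i ∈ Set.Icc (0:ℝ) 1) ∧
          x = lovasz F w - ∑ i, u i * w i} := by
  set m := Finset.univ.powerset.inf' ⟨∅, by simp⟩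
      (fun A : Finset (Fin n) => F A - ∑ i ∈ A, u i) with hm
  set Y := {x : ℝ | ∃ w : Fin n → ℝ, (∀ i, w i ∈ Set.Icc (0:ℝ) 1) ∧
      x = lovasz F w - ∑ i, u i * w i} with hY
  have hmem_pow : ∀ A : Finset (Fin n), A ∈ Finset.univ.powerset :=
    fun A => Finset.mem_powerset.2 (Finset.subset_univ A)
  have hmle : ∀ A : Finset (Fin n), m ≤ F A - ∑ i ∈ A, u i := fun A =>
    Finset.inf'_le _ (hmem_pow A)
  have hm0 : m ≤ 0 := by
    have := hmle ∅
    simpa [hF0] using this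
  -- lower bound: every element of Y is ≥ m
  have hlow : ∀ x ∈ Y, m ≤ x := by
    rintro x ⟨w, hw, rfl⟩
    rw [lovasz_sub_eq F u w]
    set σ := Tuple.sort (fun i => -w i) with hσ
    apply key_bound (Gm F u σ) (vv w) m n
    · unfold Gm; rw [segSet_zero]; simp [hF0]
    · intro k; exact hmle (segSet σ k)
    · exact hm0
    · intro k
      unfold vv
      split
      · exact (hw _).1
      · exact le_rfl
    · unfold vv
      split
      · exact (hw _).2
      · linarith
    · intro i hi
      have hin : i < n := by omega
      unfold vv
      rw [dif_pos hi, dif_pos hin, ← hσ]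
      exact sort_antitone w (by simp [Fin.mk_le_mk])
  -- the minimum is attained in Y via the indicator vector
  obtain ⟨A, _, hA⟩ := Finset.exists_mem_eq_inf' (⟨∅, by simp⟩ :
      (Finset.univ.powerset (α := Fin n)).Nonempty)
      (fun A : Finset (Fin n) => F A - ∑ i ∈ A, u i)
  have hmY : m ∈ Y := by
    refine ⟨fun i => if i ∈ A then (1 : ℝ) else 0, fun i => ?_, ?_⟩
    · by_cases h : i ∈ A <;> simp [h]
    · rw [lovasz_indicator F hF0 A, hm, hA]
      congr 1
      simp only [mul_ite, mul_one, mul_zero]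
      rw [Finset.sum_ite_mem, Finset.univ_inter]
  exact le_antisymm (le_csInf ⟨m, hmY⟩ hlow) (csInf_le ⟨m, hlow⟩ hmY)
end

section
/- SFM duality: min_{A ⊆ V} (F(A) − u(A)) = max_{s ∈ B(F)} Σ_{i=1}^n min(s_i − u_i, 0). -/
/-!
The base polytope is compact and contains the greedy vector, so `s ↦ Σᵢ min (sᵢ - uᵢ) 0`
attains its maximum on `B(F)` at some `y`. If `yᵢ < uᵢ` and `yⱼ > uⱼ`, some tight set of `y`
contains `i` but not `j`: otherwise shifting a little mass from `j` to `i` stays in `B(F)` and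
increases the objective. By submodularity tight sets are closed under `∪` and `∩`, so the union
`A` over all `i` with `yᵢ < uᵢ` of the smallest tight set containing `i` is tight and
`{yᵢ < uᵢ} ⊆ A ⊆ {yᵢ ≤ uᵢ}`. Hence `F(A) - u(A) = y(A) - u(A) = Σᵢ min (yᵢ - uᵢ) 0`, while
`Σᵢ min (sᵢ - uᵢ) 0 ≤ s(B) - u(B) ≤ F(B) - u(B)` for every `s ∈ B(F)` and every `B`.
-/

open Finset

section BasePolytope

variable {n : ℕ} {F : Finset (Fin n) → ℝ}

namespace Submodular

theorem tight_union_inter (hF : Submodular F) {y : Fin n → ℝ}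
    (hy : ∀ A, ∑ i ∈ A, y i ≤ F A) {A B : Finset (Fin n)}
    (hA : ∑ i ∈ A, y i = F A) (hB : ∑ i ∈ B, y i = F B) :
    ∑ i ∈ A ∪ B, y i = F (A ∪ B) ∧ ∑ i ∈ A ∩ B, y i = F (A ∩ B) := by
  have hsum := sum_union_inter (s₁ := A) (s₂ := B) (f := y)
  constructor <;> linarith [hF A B, hy (A ∪ B), hy (A ∩ B)]

end Submodular

noncomputable def greedyVec (F : Finset (Fin n) → ℝ) (i : Fin n) : ℝ :=
  F (Iic i) - F (Iio i)

theorem sum_greedyVec_univ (hF0 : F ∅ = 0) : ∑ i, greedyVec F i = F univ := by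
  set G : ℕ → ℝ := fun m => F {i | (i : ℕ) < m}
  have hstep : ∀ i : Fin n, greedyVec F i = G (i + 1) - G i := by
    intro i
    simp only [greedyVec, G]
    congr 2
    · ext k
      simp only [mem_Iic, mem_filter, mem_univ, true_and, Fin.le_def]
      omega
    · ext k
      simp only [mem_Iio, mem_filter, mem_univ, true_and, Fin.lt_def]
  rw [Fintype.sum_congr _ _ hstep, Fin.sum_univ_eq_sum_range (fun m => G (m + 1) - G m),
    sum_range_sub]
  simp [G, hF0]

theorem Submodular.sum_greedyVec_le (hF : Submodular F) (hF0 : F ∅ = 0) (A : Finset (Fin n)) :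
    ∑ i ∈ A, greedyVec F i ≤ F A := by
  induction A using Finset.induction_on_max with
  | empty => simp [hF0]
  | insert a s hlt ih =>
    have hunion : Iio a ∪ insert a s = Iic a := by
      ext k
      simp only [mem_union, mem_Iio, mem_insert, mem_Iic]
      constructor
      · rintro (h | rfl | h)
        exacts [h.le, le_rfl, (hlt k h).le]
      · intro h
        rcases h.lt_or_eq with h | h
        exacts [Or.inl h, Or.inr (Or.inl h)]
    have hinter : Iio a ∩ insert a s = s := by
      ext k
      simp only [mem_inter, mem_Iio, mem_insert]
      constructor
      · rintro ⟨h, rfl | h'⟩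
        exacts [absurd h (lt_irrefl k), h']
      · intro h
        exact ⟨hlt k h, Or.inr h⟩
    have hsub := hF (Iio a) (insert a s)
    rw [hunion, hinter] at hsub
    have hstep : greedyVec F a = F (Iic a) - F (Iio a) := rfl
    rw [sum_insert fun h => lt_irrefl a (hlt a h)]
    linarith

theorem Submodular.greedyVec_mem_basePolytope (hF : Submodular F) (hF0 : F ∅ = 0) :
    greedyVec F ∈ basePolytope F :=
  ⟨sum_greedyVec_univ hF0, hF.sum_greedyVec_le hF0⟩

theorem isCompact_basePolytope : IsCompact (basePolytope F) := by
  have hclosed : IsClosed (basePolytope F) := by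
    have : basePolytope F = {s | ∑ i, s i = F univ} ∩ ⋂ A, {s | ∑ i ∈ A, s i ≤ F A} := by
      ext s
      simp [basePolytope]
    rw [this]
    exact (isClosed_eq (by fun_prop) continuous_const).inter
      (isClosed_iInter fun A => isClosed_le (by fun_prop) continuous_const)
  refine (isCompact_Icc (a := fun i => F univ - F (univ.erase i))
    (b := fun i => F {i})).of_isClosed_subset hclosed
    fun s hs => ⟨fun i => ?_, fun i => by simpa using hs.2 {i}⟩
  have := hs.2 (univ.erase i)
  have := add_sum_erase univ s (mem_univ i)
  linarith [hs.1]

theorem sum_min_sub_le_of_mem_basePolytope {s : Fin n → ℝ} (hs : s ∈ basePolytope F)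
    (u : Fin n → ℝ) (A : Finset (Fin n)) :
    ∑ i, min (s i - u i) 0 ≤ F A - ∑ i ∈ A, u i :=
  calc ∑ i, min (s i - u i) 0
      ≤ ∑ i ∈ A, min (s i - u i) 0 :=
        sum_le_sum_of_subset_of_nonpos' (subset_univ A) fun i _ _ => min_le_right _ _
    _ ≤ ∑ i ∈ A, (s i - u i) := sum_le_sum fun i _ => min_le_left _ _
    _ = ∑ i ∈ A, s i - ∑ i ∈ A, u i := sum_sub_distrib _ _
    _ ≤ F A - ∑ i ∈ A, u i := by linarith [hs.2 A]

theorem sum_min_sub_eq_of_tight {y u : Fin n → ℝ} {A : Finset (Fin n)}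
    (hA : ∑ i ∈ A, y i = F A) (hle : ∀ i ∈ A, y i ≤ u i) (hge : ∀ i ∉ A, u i ≤ y i) :
    ∑ i, min (y i - u i) 0 = F A - ∑ i ∈ A, u i :=
  calc ∑ i, min (y i - u i) 0
      = ∑ i ∈ A, min (y i - u i) 0 :=
        (sum_subset (subset_univ A) fun i _ hi => min_eq_right (by linarith [hge i hi])).symm
    _ = ∑ i ∈ A, (y i - u i) := sum_congr rfl fun i hi => min_eq_left (by linarith [hle i hi])
    _ = F A - ∑ i ∈ A, u i := by rw [sum_sub_distrib, hA]

theorem add_single_sub_single_mem_basePolytope {y : Fin n → ℝ} (hy : y ∈ basePolytope F)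
    {i j : Fin n} {t : ℝ} (ht : 0 ≤ t)
    (hslack : ∀ A, i ∈ A → j ∉ A → ∑ k ∈ A, y k + t ≤ F A) :
    y + Pi.single i t - Pi.single j t ∈ basePolytope F := by
  have hsum : ∀ A : Finset (Fin n), ∑ k ∈ A, (y + Pi.single i t - Pi.single j t : Fin n → ℝ) k
      = ∑ k ∈ A, y k + (if i ∈ A then t else 0) - (if j ∈ A then t else 0) := by
    intro A
    simp only [Pi.add_apply, Pi.sub_apply, sum_sub_distrib, sum_add_distrib, sum_pi_single']
  refine ⟨by rw [hsum univ]; simp [hy.1], fun A => ?_⟩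
  rw [hsum]
  have := hy.2 A
  by_cases hiA : i ∈ A <;> by_cases hjA : j ∈ A <;> simp only [hiA, hjA, if_true, if_false]
  · linarith
  · linarith [hslack A hiA hjA]
  · linarith
  · linarith

theorem sum_min_sub_add_single_sub_single {y u : Fin n → ℝ} {i j : Fin n} {t : ℝ}
    (hij : i ≠ j) (ht : 0 ≤ t) (hi : y i + t ≤ u i) (hj : u j + t ≤ y j) :
    ∑ k, min ((y + Pi.single i t - Pi.single j t : Fin n → ℝ) k - u k) 0
      = ∑ k, min (y k - u k) 0 + t := by
  have hpoint : ∀ k, min ((y + Pi.single i t - Pi.single j t : Fin n → ℝ) k - u k) 0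
      = min (y k - u k) 0 + (Pi.single i t : Fin n → ℝ) k := by
    intro k
    simp only [Pi.add_apply, Pi.sub_apply]
    by_cases hki : k = i
    · subst hki
      rw [Pi.single_eq_same, Pi.single_eq_of_ne hij, min_eq_left (by linarith),
        min_eq_left (by linarith)]
      ring
    by_cases hkj : k = j
    · subst hkj
      rw [Pi.single_eq_same, Pi.single_eq_of_ne hki, min_eq_right (by linarith),
        min_eq_right (by linarith)]
      ring
    · simp [Pi.single_eq_of_ne hki, Pi.single_eq_of_ne hkj]
  rw [Fintype.sum_congr _ _ hpoint, sum_add_distrib, sum_pi_single', if_pos (mem_univ i)]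

theorem exists_tight_mem_not_mem_of_isMaxOn {y u : Fin n → ℝ} (hy : y ∈ basePolytope F)
    (hmax : IsMaxOn (fun s : Fin n → ℝ => ∑ k, min (s k - u k) 0) (basePolytope F) y)
    {i j : Fin n} (hi : y i < u i) (hj : u j < y j) :
    ∃ A, i ∈ A ∧ j ∉ A ∧ ∑ k ∈ A, y k = F A := by
  classical
  by_contra! hsep
  have hij : i ≠ j := by
    rintro rfl
    linarith
  -- the value `1` off the separating sets only keeps the minimum positive
  let slack : Finset (Fin n) → ℝ := fun A => if i ∈ A ∧ j ∉ A then F A - ∑ k ∈ A, y k else 1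
  have hslack : ∀ A, 0 < slack A := by
    intro A
    simp only [slack]
    split_ifs with h
    exacts [sub_pos.2 ((hy.2 A).lt_of_ne (hsep A h.1 h.2)), one_pos]
  obtain ⟨A₀, hA₀⟩ := Finite.exists_min slack
  set t := min (slack A₀) (min (u i - y i) (y j - u j))
  have ht : 0 < t := lt_min (hslack A₀) (lt_min (by linarith) (by linarith))
  have hti : t ≤ u i - y i := (min_le_right _ _).trans (min_le_left _ _)
  have htj : t ≤ y j - u j := (min_le_right _ _).trans (min_le_right _ _)
  have hmem := add_single_sub_single_mem_basePolytope (i := i) (j := j) hy ht.le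
    fun A hiA hjA => by
    have htA : t ≤ slack A := (min_le_left _ _).trans (hA₀ A)
    simp only [slack, if_pos (And.intro hiA hjA)] at htA
    linarith
  have hgain := sum_min_sub_add_single_sub_single (y := y) (u := u) hij ht.le
    (by linarith) (by linarith)
  have := isMaxOn_iff.1 hmax _ hmem
  linarith

theorem Submodular.exists_tight_of_isMaxOn (hF : Submodular F) (hF0 : F ∅ = 0)
    {y u : Fin n → ℝ} (hy : y ∈ basePolytope F)
    (hmax : IsMaxOn (fun s : Fin n → ℝ => ∑ k, min (s k - u k) 0) (basePolytope F) y) :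
    ∃ A, ∑ k ∈ A, y k = F A ∧ (∀ k ∈ A, y k ≤ u k) ∧ ∀ k ∉ A, u k ≤ y k := by
  classical
  let D : Fin n → Finset (Fin n) := fun i =>
    (univ.filter fun A : Finset (Fin n) => i ∈ A ∧ ∑ k ∈ A, y k = F A).inf id
  have hD : ∀ i, i ∈ D i ∧ ∑ k ∈ D i, y k = F (D i) := fun i =>
    inf_induction (p := fun A => i ∈ A ∧ ∑ k ∈ A, y k = F A) ⟨mem_univ i, hy.1⟩
      (fun A ⟨hiA, hA⟩ B ⟨hiB, hB⟩ =>
        ⟨mem_inter.2 ⟨hiA, hiB⟩, (hF.tight_union_inter hy.2 hA hB).2⟩)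
      (fun A hA => (mem_filter.1 hA).2)
  have hDle : ∀ i, y i < u i → ∀ j ∈ D i, y j ≤ u j := by
    intro i hi j hj
    by_contra! hj'
    obtain ⟨A, hiA, hjA, hA⟩ := exists_tight_mem_not_mem_of_isMaxOn hy hmax hi hj'
    exact hjA (inf_le (f := id) (mem_filter.2 ⟨mem_univ A, hiA, hA⟩) hj)
  have hsup := sup_induction (s := univ.filter fun i => y i < u i) (f := D)
    (p := fun A => ∑ k ∈ A, y k = F A ∧ ∀ k ∈ A, y k ≤ u k) ⟨by simp [hF0], by simp⟩
      (fun A ⟨hA, hAle⟩ B ⟨hB, hBle⟩ => ⟨(hF.tight_union_inter hy.2 hA hB).1,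
        fun k hk => (mem_union.1 hk).elim (hAle k) (hBle k)⟩)
      (fun i hi => ⟨(hD i).2, hDle i (mem_filter.1 hi).2⟩)
  refine ⟨_, hsup.1, hsup.2, fun k hk => not_lt.1 fun hlt => hk ?_⟩
  exact le_sup (f := D) (mem_filter.2 ⟨mem_univ k, hlt⟩) (hD k).1

end BasePolytope

/-- SFM duality: `min_{A ⊆ V} F(A) - u(A) = max_{s ∈ B(F)} Σ_i min (s i - u i) 0`. -/
theorem sfm_duality {n : ℕ} (F : Finset (Fin n) → ℝ)
    (hF : Submodular F) (hF0 : F ∅ = 0) (u : Fin n → ℝ) :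
    (Finset.univ.powerset.inf' ⟨∅, by simp⟩
        (fun A : Finset (Fin n) => F A - ∑ i ∈ A, u i))
      = sSup {x : ℝ | ∃ s ∈ basePolytope F, x = ∑ i, min (s i - u i) 0} := by
  obtain ⟨y, hy, hmax⟩ := isCompact_basePolytope.exists_isMaxOn
    ⟨greedyVec F, hF.greedyVec_mem_basePolytope hF0⟩
    (by fun_prop : Continuous fun s : Fin n → ℝ => ∑ i, min (s i - u i) 0).continuousOn
  obtain ⟨A, hA, hle, hge⟩ := hF.exists_tight_of_isMaxOn hF0 hy hmax
  have hval := sum_min_sub_eq_of_tight hA hle hge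
  have hmin : univ.powerset.inf' ⟨∅, by simp⟩ (fun A : Finset (Fin n) => F A - ∑ i ∈ A, u i)
      = ∑ i, min (y i - u i) 0 :=
    le_antisymm (hval ▸ inf'_le _ (mem_powerset.2 (subset_univ A)))
      (le_inf' _ _ fun B _ => sum_min_sub_le_of_mem_basePolytope hy u B)
  have hgreatest : IsGreatest {x : ℝ | ∃ s ∈ basePolytope F, x = ∑ i, min (s i - u i) 0}
      (∑ i, min (y i - u i) 0) :=
    ⟨⟨y, hy, rfl⟩, by rintro _ ⟨s, hs, rfl⟩; exact isMaxOn_iff.1 hmax s hs⟩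
  rw [hmin, hgreatest.csSup_eq]
end

section
/- The duality gap gap(w,s) = f(w) − uᵀw − Σ_{i=1}^n min(s_i − u_i, 0) is nonnegative for every w ∈ [0,1]^n and s ∈ B(F), and it is zero if and only if w is optimal for min_{w∈[0,1]^n} f(w) − uᵀw and s is optimal for max_{s∈B(F)} Σ_i min(s_i − u_i, 0). -/
open Finset

namespace Gap
variable {n : ℕ}

def pref (σ : Equiv.Perm (Fin n)) (m : ℕ) : Finset (Fin n) :=
  (univ.filter (fun j : Fin n => (j : ℕ) < m)).image σ

lemma pref_zero (σ : Equiv.Perm (Fin n)) : pref σ 0 = ∅ := by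
  simp [pref]

lemma pref_of_le (σ : Equiv.Perm (Fin n)) {m : ℕ} (h : n ≤ m) : pref σ m = univ := by
  apply eq_univ_of_forall
  intro i
  refine mem_image.2 ⟨σ.symm i, ?_, σ.apply_symm_apply i⟩
  simp only [mem_filter, mem_univ, true_and]
  exact lt_of_lt_of_le (σ.symm i).isLt h

lemma pref_succ (σ : Equiv.Perm (Fin n)) {m : ℕ} (h : m < n) :
    pref σ (m + 1) = insert (σ ⟨m, h⟩) (pref σ m) := by
  ext i
  simp only [pref, mem_image, mem_insert, mem_filter, mem_univ, true_and]
  constructor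
  · rintro ⟨j, hj, rfl⟩
    rcases Nat.lt_succ_iff_lt_or_eq.1 hj with hj | hj
    · exact Or.inr ⟨j, hj, rfl⟩
    · exact Or.inl (by congr; exact Fin.ext hj)
  · rintro (rfl | ⟨j, hj, rfl⟩)
    · exact ⟨⟨m, h⟩, Nat.lt_succ_self m, rfl⟩
    · exact ⟨j, Nat.lt_succ_of_lt hj, rfl⟩

lemma not_mem_pref (σ : Equiv.Perm (Fin n)) {m : ℕ} (h : m < n) :
    σ ⟨m, h⟩ ∉ pref σ m := by
  simp only [pref, mem_image, mem_filter, mem_univ, true_and]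
  rintro ⟨j, hj, hje⟩
  have := σ.injective hje
  subst this
  exact lt_irrefl _ hj

lemma sum_pref_succ (σ : Equiv.Perm (Fin n)) {m : ℕ} (h : m < n) (s : Fin n → ℝ) :
    ∑ i ∈ pref σ (m + 1), s i = s (σ ⟨m, h⟩) + ∑ i ∈ pref σ m, s i := by
  rw [pref_succ σ h, sum_insert (not_mem_pref σ h)]

lemma Iic_image (σ : Equiv.Perm (Fin n)) (k : Fin n) :
    (Finset.Iic k).image σ = pref σ ((k : ℕ) + 1) := by
  unfold pref
  congr 1
  ext j
  simp only [Finset.mem_Iic, mem_filter, mem_univ, true_and, Nat.lt_succ_iff]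
  exact Iff.rfl

lemma Iio_image (σ : Equiv.Perm (Fin n)) (k : Fin n) :
    (Finset.Iio k).image σ = pref σ (k : ℕ) := by
  unfold pref
  congr 1
  ext j
  simp only [Finset.mem_Iio, mem_filter, mem_univ, true_and]
  exact Iff.rfl

lemma lovasz_eq (F : Finset (Fin n) → ℝ) (w : Fin n → ℝ) :
    lovasz F w = ∑ k : Fin n, w (Tuple.sort (fun i => -w i) k) *
      (F (pref (Tuple.sort (fun i => -w i)) ((k : ℕ) + 1)) -
       F (pref (Tuple.sort (fun i => -w i)) (k : ℕ))) := by
  unfold lovasz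
  simp only [Iic_image, Iio_image]

noncomputable def greedy (F : Finset (Fin n) → ℝ) (σ : Equiv.Perm (Fin n)) (i : Fin n) : ℝ :=
  F (pref σ ((σ.symm i : ℕ) + 1)) - F (pref σ (σ.symm i : ℕ))

lemma greedy_apply (F : Finset (Fin n) → ℝ) (σ : Equiv.Perm (Fin n)) (k : Fin n) :
    greedy F σ (σ k) = F (pref σ ((k : ℕ) + 1)) - F (pref σ (k : ℕ)) := by
  simp [greedy]

lemma sum_over_set (σ : Equiv.Perm (Fin n)) (A : Finset (Fin n)) (g : Fin n → ℝ) :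
    ∑ i ∈ A, g i = ∑ k ∈ univ.filter (fun k => σ k ∈ A), g (σ k) := by
  rw [Finset.sum_filter, Equiv.sum_comp σ (fun i => if i ∈ A then g i else 0)]
  simp only [Finset.sum_ite_mem, Finset.univ_inter]

lemma greedy_mem_base (F : Finset (Fin n) → ℝ) (hF : Submodular F) (hF0 : F ∅ = 0)
    (σ : Equiv.Perm (Fin n)) :
    (∑ i, greedy F σ i) = F Finset.univ ∧
      ∀ A : Finset (Fin n), (∑ i ∈ A, greedy F σ i) ≤ F A := by
  constructor
  · rw [← Equiv.sum_comp σ (greedy F σ)]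
    simp only [greedy_apply]
    rw [Fin.sum_univ_eq_sum_range (fun m => F (pref σ (m + 1)) - F (pref σ m)) n,
      Finset.sum_range_sub (fun m => F (pref σ m)) n, pref_zero, pref_of_le σ le_rfl, hF0]
    ring
  · intro A
    rw [sum_over_set σ A]
    have key : ∀ k ∈ univ.filter (fun k => σ k ∈ A),
        greedy F σ (σ k) ≤ F (A ∩ pref σ ((k:ℕ)+1)) - F (A ∩ pref σ (k:ℕ)) := by
      intro k hk
      rw [mem_filter] at hk
      rw [greedy_apply]
      have hlt : (k : ℕ) < n := k.isLt
      have hP : pref σ ((k:ℕ)+1) = insert (σ k) (pref σ (k:ℕ)) := by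
        rw [pref_succ σ hlt]
      have hx : σ k ∉ pref σ (k:ℕ) := by
        have := not_mem_pref σ hlt
        simpa using this
      have hun : (A ∩ pref σ ((k:ℕ)+1)) ∪ pref σ (k:ℕ) = pref σ ((k:ℕ)+1) := by
        ext i
        simp only [hP, mem_union, mem_inter, mem_insert]
        constructor
        · rintro (⟨_, h⟩ | h) <;> tauto
        · rintro (rfl | h)
          · exact Or.inl ⟨hk.2, Or.inl rfl⟩
          · exact Or.inr h
      have hin : (A ∩ pref σ ((k:ℕ)+1)) ∩ pref σ (k:ℕ) = A ∩ pref σ (k:ℕ) := by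
        ext i
        simp only [hP, mem_inter, mem_insert]
        tauto
      have := hF (A ∩ pref σ ((k:ℕ)+1)) (pref σ (k:ℕ))
      rw [hun, hin] at this
      linarith
    calc ∑ k ∈ univ.filter (fun k => σ k ∈ A), greedy F σ (σ k)
        ≤ ∑ k ∈ univ.filter (fun k => σ k ∈ A),
            (F (A ∩ pref σ ((k:ℕ)+1)) - F (A ∩ pref σ (k:ℕ))) := Finset.sum_le_sum key
      _ = ∑ k : Fin n, (F (A ∩ pref σ ((k:ℕ)+1)) - F (A ∩ pref σ (k:ℕ))) := by
          apply Finset.sum_subset (filter_subset _ _)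
          intro k _ hk
          rw [mem_filter, not_and] at hk
          have hkA : σ k ∉ A := hk (mem_univ k)
          have hP : pref σ ((k:ℕ)+1) = insert (σ k) (pref σ (k:ℕ)) := by
            rw [pref_succ σ k.isLt]
          have : A ∩ pref σ ((k:ℕ)+1) = A ∩ pref σ (k:ℕ) := by
            ext i
            simp only [hP, mem_inter, mem_insert]
            constructor
            · rintro ⟨hiA, rfl | h⟩
              · exact absurd hiA hkA
              · exact ⟨hiA, h⟩
            · tauto
          rw [this, sub_self]
      _ = F A := by
          rw [Fin.sum_univ_eq_sum_range (fun m => F (A ∩ pref σ (m + 1)) - F (A ∩ pref σ m)) n,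
            Finset.sum_range_sub (fun m => F (A ∩ pref σ m)) n, pref_zero, pref_of_le σ le_rfl]
          simp [hF0]

lemma abel_nonneg (a h : ℕ → ℝ) (ha : ∀ k, a (k + 1) ≤ a k) (hh : ∀ m, 0 ≤ h m) :
    ∀ N : ℕ, a N * h N - a 0 * h 0 ≤ ∑ k ∈ Finset.range N, a k * (h (k + 1) - h k) := by
  intro N
  induction N with
  | zero => simp
  | succ N ih =>
    rw [Finset.sum_range_succ]
    have h1 : a (N + 1) * h (N + 1) ≤ a N * h (N + 1) :=
      mul_le_mul_of_nonneg_right (ha N) (hh (N + 1))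
    nlinarith [ih]

lemma sorted_antitone (w : Fin n → ℝ) :
    ∀ k l : Fin n, k ≤ l → w (Tuple.sort (fun i => -w i) l) ≤ w (Tuple.sort (fun i => -w i) k) := by
  intro k l hkl
  have := Tuple.monotone_sort (fun i => -w i) hkl
  simpa using this

lemma weak_duality_1 (F : Finset (Fin n) → ℝ) (hF0 : F ∅ = 0)
    (s : Fin n → ℝ) (hs : s ∈ basePolytope F) (w : Fin n → ℝ) (hw : ∀ i, 0 ≤ w i) :
    ∑ i, s i * w i ≤ lovasz F w := by
  set σ := Tuple.sort (fun i => -w i) with hσ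
  set a : ℕ → ℝ := fun m => if h : m < n then w (σ ⟨m, h⟩) else 0 with ha
  set h : ℕ → ℝ := fun m => F (pref σ m) - ∑ i ∈ pref σ m, s i with hh
  have h0 : h 0 = 0 := by simp [hh, pref_zero, hF0]
  have hn : h n = 0 := by simp [hh, pref_of_le σ le_rfl, hs.1]
  have hpos : ∀ m, 0 ≤ h m := fun m => by simp only [hh]; linarith [hs.2 (pref σ m)]
  have hanti : ∀ k, a (k + 1) ≤ a k := by
    intro k
    by_cases h1 : k + 1 < n
    · have hk : k < n := by omega
      simp only [ha, dif_pos h1, dif_pos hk]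
      exact sorted_antitone w ⟨k, hk⟩ ⟨k+1, h1⟩ (by simp [Fin.le_def])
    · by_cases h2 : k < n
      · simp only [ha, dif_neg h1, dif_pos h2]
        exact hw _
      · simp [ha, dif_neg h1, dif_neg h2]
  have key : lovasz F w - ∑ i, s i * w i = ∑ k ∈ Finset.range n, a k * (h (k + 1) - h k) := by
    rw [lovasz_eq, ← Equiv.sum_comp σ (fun i => s i * w i), ← Finset.sum_sub_distrib,
      ← Fin.sum_univ_eq_sum_range (fun m => a m * (h (m + 1) - h m)) n]
    apply Finset.sum_congr rfl
    intro k _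
    have hk : (k : ℕ) < n := k.isLt
    have hak : a (k : ℕ) = w (σ k) := by simp [ha, dif_pos hk]
    have hstep : h ((k : ℕ) + 1) - h (k : ℕ)
        = F (pref σ ((k:ℕ)+1)) - F (pref σ (k:ℕ)) - s (σ k) := by
      simp only [hh]
      rw [sum_pref_succ σ hk s]
      ring
    simp only [hak, hstep]
    ring
  have habel := abel_nonneg a h hanti hpos n
  rw [h0, hn, key.symm] at habel
  linarith

lemma card_filter_lt {m : ℕ} (h : m ≤ n) :
    ((Finset.univ : Finset (Fin n)).filter (fun k : Fin n => (k:ℕ) < m)).card = m := by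
  have himg : ((Finset.univ : Finset (Fin n)).filter (fun k : Fin n => (k:ℕ) < m)).image Fin.val
      = Finset.range m := by
    ext j
    simp only [mem_image, mem_filter, mem_univ, true_and, mem_range]
    constructor
    · rintro ⟨k, hk, rfl⟩; exact hk
    · intro hj; exact ⟨⟨j, lt_of_lt_of_le hj h⟩, hj, rfl⟩
  have := Finset.card_image_of_injective
    ((Finset.univ : Finset (Fin n)).filter (fun k : Fin n => (k:ℕ) < m)) Fin.val_injective
  rw [himg, Finset.card_range] at this
  omega

-- downward-closed finset of Fin n is an initial segment
lemma initial_segment (T : Finset (Fin n)) (hdc : ∀ k l : Fin n, k ≤ l → l ∈ T → k ∈ T) :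
    T = (Finset.univ : Finset (Fin n)).filter (fun k : Fin n => (k:ℕ) < T.card) := by
  have hsub : T ⊆ (Finset.univ : Finset (Fin n)).filter (fun k : Fin n => (k:ℕ) < T.card) := by
    intro k hk
    simp only [mem_filter, mem_univ, true_and]
    have hIic : Finset.Iic k ⊆ T := fun j hj => hdc j k (Finset.mem_Iic.1 hj) hk
    have := Finset.card_le_card hIic
    rw [Fin.card_Iic] at this
    omega
  have hcard : T.card ≤ n := by
    have := Finset.card_le_card (Finset.subset_univ T)
    simpa using this
  exact Finset.eq_of_subset_of_card_le hsub (by rw [card_filter_lt hcard])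

lemma lovasz_indicator (F : Finset (Fin n) → ℝ) (hF0 : F ∅ = 0) (A : Finset (Fin n)) :
    lovasz F (fun i => if i ∈ A then (1:ℝ) else 0) = F A := by
  set w : Fin n → ℝ := fun i => if i ∈ A then (1:ℝ) else 0 with hwdef
  set σ := Tuple.sort (fun i => -w i) with hσ
  set T := (Finset.univ : Finset (Fin n)).filter (fun k => σ k ∈ A) with hT
  have hdc : ∀ k l : Fin n, k ≤ l → l ∈ T → k ∈ T := by
    intro k l hkl hl
    simp only [hT, mem_filter, mem_univ, true_and] at hl ⊢
    have h1 : w (σ l) ≤ w (σ k) := sorted_antitone w k l hkl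
    have h2 : w (σ l) = 1 := by simp [hwdef, hl]
    by_contra hkA
    have h3 : w (σ k) = 0 := by simp [hwdef, hkA]
    rw [h2, h3] at h1; linarith
  have hTA : T.image σ = A := by
    ext i
    simp only [hT, mem_image, mem_filter, mem_univ, true_and]
    constructor
    · rintro ⟨k, hk, rfl⟩; exact hk
    · intro hi; exact ⟨σ.symm i, by simpa using hi, by simp⟩
  have hcardT : T.card = A.card := by
    rw [← hTA, Finset.card_image_of_injective T σ.injective]
  set m := A.card with hm
  have hmn : m ≤ n := by
    have := Finset.card_le_card (Finset.subset_univ A)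
    simpa using this
  have hTseg : T = (Finset.univ : Finset (Fin n)).filter (fun k : Fin n => (k:ℕ) < m) := by
    rw [← hcardT]
    exact initial_segment T hdc
  have hmemT : ∀ k : Fin n, σ k ∈ A ↔ (k:ℕ) < m := by
    intro k
    constructor
    · intro h
      have : k ∈ T := by simp [hT, h]
      rw [hTseg] at this
      simpa using this
    · intro h
      have : k ∈ T := by rw [hTseg]; simp [h]
      simpa [hT] using this
  have hprefA : pref σ m = A := by
    rw [pref, ← hTseg, hTA]
  rw [lovasz_eq]
  have hterm : ∀ k : Fin n, w (σ k) * (F (pref σ ((k:ℕ)+1)) - F (pref σ (k:ℕ)))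
      = if (k:ℕ) < m then (F (pref σ ((k:ℕ)+1)) - F (pref σ (k:ℕ))) else 0 := by
    intro k
    by_cases h : (k:ℕ) < m
    · have : σ k ∈ A := (hmemT k).2 h
      simp [hwdef, this, h]
    · have : σ k ∉ A := fun hc => h ((hmemT k).1 hc)
      simp [hwdef, this, h]
  calc ∑ k : Fin n, w (σ k) * (F (pref σ ((k:ℕ)+1)) - F (pref σ (k:ℕ)))
      = ∑ k : Fin n, (if (k:ℕ) < m then (F (pref σ ((k:ℕ)+1)) - F (pref σ (k:ℕ))) else 0) :=
        Finset.sum_congr rfl (fun k _ => hterm k)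
    _ = ∑ j ∈ Finset.range n, (if j < m then (F (pref σ (j+1)) - F (pref σ j)) else 0) :=
        Fin.sum_univ_eq_sum_range (fun j => if j < m then (F (pref σ (j+1)) - F (pref σ j)) else 0) n
    _ = ∑ j ∈ (Finset.range n).filter (fun j => j < m), (F (pref σ (j+1)) - F (pref σ j)) :=
        (Finset.sum_filter _ _).symm
    _ = ∑ j ∈ Finset.range m, (F (pref σ (j+1)) - F (pref σ j)) := by
        congr 1
        ext j
        simp only [mem_filter, mem_range]
        omega
    _ = F (pref σ m) - F (pref σ 0) := Finset.sum_range_sub (fun j => F (pref σ j)) m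
    _ = F A := by rw [hprefA, pref_zero, hF0, sub_zero]

lemma base_isClosed (F : Finset (Fin n) → ℝ) : IsClosed (basePolytope F) := by
  have : basePolytope F = {s : Fin n → ℝ | (∑ i, s i) = F Finset.univ} ∩
      ⋂ A : Finset (Fin n), {s : Fin n → ℝ | (∑ i ∈ A, s i) ≤ F A} := by
    ext s
    simp [basePolytope, Set.mem_iInter]
  rw [this]
  refine IsClosed.inter (isClosed_eq (by continuity) continuous_const) ?_
  exact isClosed_iInter (fun A => isClosed_le (by continuity) continuous_const)

lemma base_isCompact (F : Finset (Fin n) → ℝ) : IsCompact (basePolytope F) := by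
  apply IsCompact.of_isClosed_subset
    (isCompact_Icc (a := fun i : Fin n => F Finset.univ - F (Finset.univ.erase i))
      (b := fun i : Fin n => F {i}))
    (base_isClosed F)
  intro s hs
  constructor
  · intro i
    have h1 : ∑ j ∈ Finset.univ.erase i, s j + s i = ∑ j, s j :=
      Finset.sum_erase_add Finset.univ s (Finset.mem_univ i)
    have h2 := hs.2 (Finset.univ.erase i)
    have h3 := hs.1
    simp only
    linarith
  · intro i
    have := hs.2 {i}
    simpa using this

lemma exists_max (F : Finset (Fin n) → ℝ) (hne : (basePolytope F).Nonempty) (u : Fin n → ℝ) :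
    ∃ s ∈ basePolytope F, ∀ s' ∈ basePolytope F,
      (∑ i, min (s' i - u i) 0) ≤ ∑ i, min (s i - u i) 0 := by
  have hc : Continuous (fun s : Fin n → ℝ => ∑ i, min (s i - u i) 0) := by
    apply continuous_finset_sum
    intro i _
    exact ((continuous_apply i).sub continuous_const).min continuous_const
  obtain ⟨x, hx, hmax⟩ := (base_isCompact F).exists_isMaxOn hne hc.continuousOn
  exact ⟨x, hx, fun s' hs' => hmax hs'⟩


lemma tight_union (F : Finset (Fin n) → ℝ) (hF : Submodular F) {s : Fin n → ℝ}
    (hs : s ∈ basePolytope F) {A B : Finset (Fin n)}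
    (hA : ∑ t ∈ A, s t = F A) (hB : ∑ t ∈ B, s t = F B) :
    (∑ t ∈ A ∪ B, s t = F (A ∪ B)) ∧ (∑ t ∈ A ∩ B, s t = F (A ∩ B)) := by
  have h1 := hs.2 (A ∪ B)
  have h2 := hs.2 (A ∩ B)
  have h3 := hF A B
  have h4 := Finset.sum_union_inter (s₁ := A) (s₂ := B) (f := s)
  constructor <;> linarith

lemma pair_tight (F : Finset (Fin n) → ℝ) (u : Fin n → ℝ) {s : Fin n → ℝ}
    (hs : s ∈ basePolytope F)
    (hmax : ∀ s' ∈ basePolytope F,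
      (∑ t, min (s' t - u t) 0) ≤ ∑ t, min (s t - u t) 0)
    {i j : Fin n} (hi : s i < u i) (hj : u j < s j) :
    ∃ A : Finset (Fin n), i ∈ A ∧ j ∉ A ∧ ∑ t ∈ A, s t = F A := by
  by_contra hcon
  push_neg at hcon
  have hij : i ≠ j := by rintro rfl; linarith
  set 𝒜 := (Finset.univ : Finset (Fin n)).powerset.filter (fun A => i ∈ A ∧ j ∉ A) with h𝒜
  have hne : 𝒜.Nonempty := by
    refine ⟨{i}, ?_⟩
    simp [h𝒜, Finset.mem_filter, Finset.mem_powerset, hij.symm]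
  set ε₁ := 𝒜.inf' hne (fun A => F A - ∑ t ∈ A, s t) with hε₁
  have hε₁pos : 0 < ε₁ := by
    rw [hε₁, Finset.lt_inf'_iff]
    intro A hA
    rw [h𝒜, Finset.mem_filter] at hA
    have h1 := hs.2 A
    have h2 := hcon A hA.2.1 hA.2.2
    cases lt_or_eq_of_le h1 with
    | inl h => linarith
    | inr h => exact absurd h h2
  set ε := min ε₁ (min (u i - s i) (s j - u j)) with hε
  have hεpos : 0 < ε := by
    rw [hε]
    simp only [lt_min_iff]
    exact ⟨hε₁pos, by linarith, by linarith⟩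
  set s' : Fin n → ℝ := fun t => s t + (if t = i then ε else 0) - (if t = j then ε else 0)
    with hs'def
  have hsum : ∀ A : Finset (Fin n), ∑ t ∈ A, s' t =
      (∑ t ∈ A, s t) + (if i ∈ A then ε else 0) - (if j ∈ A then ε else 0) := by
    intro A
    simp only [hs'def]
    rw [Finset.sum_sub_distrib, Finset.sum_add_distrib,
      Finset.sum_ite_eq' A i (fun _ => ε), Finset.sum_ite_eq' A j (fun _ => ε)]
  have hs'mem : s' ∈ basePolytope F := by
    constructor
    · rw [hsum Finset.univ]
      simp [hs.1]
    · intro A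
      rw [hsum A]
      by_cases hiA : i ∈ A <;> by_cases hjA : j ∈ A
      · simp only [if_pos hiA, if_pos hjA]
        linarith [hs.2 A]
      · have hA𝒜 : A ∈ 𝒜 := by
          rw [h𝒜, Finset.mem_filter, Finset.mem_powerset]
          exact ⟨Finset.subset_univ A, hiA, hjA⟩
        have h1 : ε₁ ≤ F A - ∑ t ∈ A, s t := Finset.inf'_le _ hA𝒜
        have h2 : ε ≤ ε₁ := min_le_left _ _
        simp only [if_pos hiA, if_neg hjA]
        linarith
      · simp only [if_neg hiA, if_pos hjA]
        linarith [hs.2 A]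
      · simp only [if_neg hiA, if_neg hjA]
        linarith [hs.2 A]
  have hεi : ε ≤ u i - s i := le_trans (min_le_right _ _) (min_le_left _ _)
  have hεj : ε ≤ s j - u j := le_trans (min_le_right _ _) (min_le_right _ _)
  have hval : ∀ t, min (s' t - u t) 0 = min (s t - u t) 0 + (if t = i then ε else 0) := by
    intro t
    by_cases hti : t = i
    · subst hti
      have h1 : s' t = s t + ε := by simp [hs'def, hij]
      rw [h1, if_pos rfl, min_eq_left (by linarith), min_eq_left (by linarith)]
      ring
    · by_cases htj : t = j
      · subst htj
        have h1 : s' t = s t - ε := by simp [hs'def, hti]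
        rw [h1, if_neg hti, min_eq_right (by linarith), min_eq_right (by linarith)]
        ring
      · have h1 : s' t = s t := by simp [hs'def, hti, htj]
        rw [h1, if_neg hti]
        ring
  have hφ : (∑ t, min (s' t - u t) 0) = (∑ t, min (s t - u t) 0) + ε := by
    simp only [hval]
    rw [Finset.sum_add_distrib, Finset.sum_ite_eq' Finset.univ i (fun _ => ε)]
    simp
  have := hmax s' hs'mem
  rw [hφ] at this
  linarith

lemma exists_optimal_pair (F : Finset (Fin n) → ℝ) (hF : Submodular F) (hF0 : F ∅ = 0)
    (u : Fin n → ℝ) {s : Fin n → ℝ} (hs : s ∈ basePolytope F)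
    (hmax : ∀ s' ∈ basePolytope F,
      (∑ t, min (s' t - u t) 0) ≤ ∑ t, min (s t - u t) 0) :
    ∃ A : Finset (Fin n), (∑ t, min (s t - u t) 0) = F A - ∑ t ∈ A, u t := by
  classical
  set N := (Finset.univ : Finset (Fin n)).filter (fun t => s t < u t) with hN
  set P := (Finset.univ : Finset (Fin n)).filter (fun t => u t < s t) with hP
  have hminN : ∀ t, min (s t - u t) 0 = if t ∈ N then s t - u t else 0 := by
    intro t
    by_cases ht : t ∈ N
    · rw [if_pos ht]
      rw [hN, Finset.mem_filter] at ht
      exact min_eq_left (by linarith [ht.2])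
    · rw [if_neg ht]
      rw [hN, Finset.mem_filter] at ht
      simp only [Finset.mem_univ, true_and] at ht
      exact min_eq_right (by push_neg at ht; linarith)
  have hφN : (∑ t, min (s t - u t) 0) = ∑ t ∈ N, (s t - u t) := by
    simp only [hminN]
    rw [Finset.sum_ite_mem, Finset.univ_inter]
  -- main construction of a tight set A with N ⊆ A and A ∩ P = ∅
  have hmain : ∃ A : Finset (Fin n), N ⊆ A ∧ (∀ j ∈ P, j ∉ A) ∧ ∑ t ∈ A, s t = F A := by
    rcases Finset.eq_empty_or_nonempty N with hNe | hNne
    · refine ⟨∅, by simp [hNe], by simp, by simp [hF0]⟩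
    rcases Finset.eq_empty_or_nonempty P with hPe | hPne
    · exact ⟨Finset.univ, Finset.subset_univ N, by simp [hPe], hs.1⟩
    have hT : ∀ i ∈ N, ∀ j ∈ P, ∃ A : Finset (Fin n), i ∈ A ∧ j ∉ A ∧ ∑ t ∈ A, s t = F A := by
      intro i hi j hj
      rw [hN, Finset.mem_filter] at hi
      rw [hP, Finset.mem_filter] at hj
      exact pair_tight F u hs hmax hi.2 hj.2
    choose! T hTi hTj hTt using hT
    set inner : Fin n → Finset (Fin n) := fun i => P.inf' hPne (T i) with hinner
    set A := N.sup' hNne inner with hA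
    have hinner_tight : ∀ i ∈ N, ∑ t ∈ inner i, s t = F (inner i) := by
      intro i hi
      apply Finset.inf'_induction hPne (T i)
        (p := fun B => ∑ t ∈ B, s t = F B)
      · intro a ha b hb
        exact (tight_union F hF hs ha hb).2
      · intro j hj
        exact hTt i hi j hj
    refine ⟨A, ?_, ?_, ?_⟩
    · -- N ⊆ A
      intro i hi
      have h1 : inner i ⊆ A := Finset.le_sup' inner hi
      apply h1
      have h2 : ({i} : Finset (Fin n)) ≤ inner i := by
        apply Finset.le_inf' hPne (T i)
        intro j hj
        simpa using hTi i hi j hj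
      simpa using h2 (Finset.mem_singleton_self i)
    · -- A ∩ P = ∅
      intro j hj hjA
      have hAle : A ≤ Finset.univ \ P := by
        apply Finset.sup'_le hNne inner
        intro i hi
        intro x hx
        rw [Finset.mem_sdiff]
        refine ⟨Finset.mem_univ x, fun hxP => ?_⟩
        have : inner i ≤ T i x := Finset.inf'_le (T i) hxP
        exact hTj i hi x hxP (this hx)
      have := hAle hjA
      rw [Finset.mem_sdiff] at this
      exact this.2 hj
    · -- tight
      apply Finset.sup'_induction hNne inner
        (p := fun B => ∑ t ∈ B, s t = F B)
      · intro a ha b hb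
        exact (tight_union F hF hs ha hb).1
      · exact hinner_tight
  obtain ⟨A, hNA, hAP, htight⟩ := hmain
  refine ⟨A, ?_⟩
  rw [hφN]
  have hAval : ∑ t ∈ A, (s t - u t) = ∑ t ∈ N, (s t - u t) := by
    symm
    apply Finset.sum_subset hNA
    intro t htA htN
    rw [hN, Finset.mem_filter] at htN
    simp only [Finset.mem_univ, true_and] at htN
    push_neg at htN
    have htP : t ∉ P := fun h => hAP t h htA
    rw [hP, Finset.mem_filter] at htP
    simp only [Finset.mem_univ, true_and] at htP
    push_neg at htP
    have : s t = u t := le_antisymm htP htN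
    rw [this, sub_self]
  rw [← hAval, Finset.sum_sub_distrib, htight]


end Gap

/-- The duality gap is nonnegative, and is zero iff the primal-dual pair is optimal. -/
theorem gap_nonneg_and_zero_iff_optimal {n : ℕ} (F : Finset (Fin n) → ℝ)
    (hF : Submodular F) (hF0 : F ∅ = 0) (u : Fin n → ℝ)
    (w s : Fin n → ℝ) (hw : ∀ i, w i ∈ Set.Icc (0:ℝ) 1) (hs : s ∈ basePolytope F) :
    0 ≤ lovasz F w - (∑ i, u i * w i) - (∑ i, min (s i - u i) 0) ∧
    (lovasz F w - (∑ i, u i * w i) - (∑ i, min (s i - u i) 0) = 0 ↔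
      ((∀ w' : Fin n → ℝ, (∀ i, w' i ∈ Set.Icc (0:ℝ) 1) →
          lovasz F w - (∑ i, u i * w i) ≤ lovasz F w' - ∑ i, u i * w' i) ∧
        (∀ s' ∈ basePolytope F,
          (∑ i, min (s' i - u i) 0) ≤ ∑ i, min (s i - u i) 0))) := by
  classical
  have gap_nn : ∀ (w' : Fin n → ℝ), (∀ i, w' i ∈ Set.Icc (0:ℝ) 1) →
      ∀ s' ∈ basePolytope F,
      0 ≤ lovasz F w' - (∑ i, u i * w' i) - (∑ i, min (s' i - u i) 0) := by
    intro w' hw' s' hs'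
    have h1 : ∑ i, s' i * w' i ≤ lovasz F w' :=
      Gap.weak_duality_1 F hF0 s' hs' w' (fun i => (hw' i).1)
    have h2 : (∑ i, min (s' i - u i) 0) ≤ ∑ i, (s' i - u i) * w' i := by
      apply Finset.sum_le_sum
      intro i _
      rcases le_or_gt 0 (s' i - u i) with h | h
      · rw [min_eq_right h]
        exact mul_nonneg h (hw' i).1
      · rw [min_eq_left h.le]
        nlinarith [(hw' i).2, (hw' i).1]
    have h3 : ∑ i, (s' i - u i) * w' i = (∑ i, s' i * w' i) - ∑ i, u i * w' i := by
      rw [← Finset.sum_sub_distrib]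
      apply Finset.sum_congr rfl
      intro i _
      ring
    linarith
  have hmain := gap_nn w hw s hs
  refine ⟨hmain, ?_, ?_⟩
  · intro h0
    constructor
    · intro w' hw'
      have := gap_nn w' hw' s hs
      linarith
    · intro s' hs'
      have := gap_nn w hw s' hs'
      linarith
  · rintro ⟨hwopt, hsopt⟩
    have hbne : (basePolytope F).Nonempty := by
      refine ⟨Gap.greedy F (Equiv.refl (Fin n)), ?_⟩
      exact Gap.greedy_mem_base F hF hF0 (Equiv.refl (Fin n))
    obtain ⟨sstar, hsstar, hsmax⟩ := Gap.exists_max F hbne u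
    obtain ⟨A, hAval⟩ := Gap.exists_optimal_pair F hF hF0 u hsstar hsmax
    set wA : Fin n → ℝ := fun i => if i ∈ A then (1:ℝ) else 0 with hwA
    have hwAmem : ∀ i, wA i ∈ Set.Icc (0:ℝ) 1 := by
      intro i
      by_cases h : i ∈ A <;> simp [hwA, h]
    have hlov : lovasz F wA = F A := Gap.lovasz_indicator F hF0 A
    have huwA : (∑ i, u i * wA i) = ∑ i ∈ A, u i := by
      simp only [hwA, mul_ite, mul_one, mul_zero]
      rw [Finset.sum_ite_mem, Finset.univ_inter]
    have h1 : lovasz F w - (∑ i, u i * w i) ≤ F A - ∑ i ∈ A, u i := by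
      have := hwopt wA hwAmem
      rw [hlov, huwA] at this
      linarith
    have h2 : (∑ i, min (sstar i - u i) 0) ≤ ∑ i, min (s i - u i) 0 := hsopt sstar hsstar
    rw [hAval] at h2
    linarith
end

section
/- Total variation denoising duality: min_{w ∈ ℝ^n} f(w) − uᵀw + (1/2)‖w‖² = max_{s ∈ B(F)} −(1/2)‖s − u‖², with the unique optima related by w = u − s; i.e., the TV denoising solution is w = u − Π_{B(F)}(u), where Π_{B(F)} is orthogonal projection onto B(F). -/
open Finset

namespace TVDual

variable {n : ℕ}
def Tset (σ : Equiv.Perm (Fin n)) (m : ℕ) : Finset (Fin n) :=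
  (Finset.univ.filter fun k : Fin n => (k : ℕ) < m).image σ

lemma Tset_zero (σ : Equiv.Perm (Fin n)) : Tset σ 0 = ∅ := by
  simp [Tset]

lemma mem_Tset {σ : Equiv.Perm (Fin n)} {m : ℕ} {i : Fin n} :
    i ∈ Tset σ m ↔ (σ.symm i : ℕ) < m := by
  simp only [Tset, Finset.mem_image, Finset.mem_filter, Finset.mem_univ, true_and]
  constructor
  · rintro ⟨k, hk, rfl⟩; simpa using hk
  · intro h; exact ⟨σ.symm i, h, by simp⟩

lemma Tset_ge (σ : Equiv.Perm (Fin n)) {m : ℕ} (h : n ≤ m) : Tset σ m = univ := by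
  ext i; simp [mem_Tset, lt_of_lt_of_le (σ.symm i).isLt h]

lemma Tset_succ (σ : Equiv.Perm (Fin n)) (k : Fin n) :
    Tset σ ((k : ℕ) + 1) = insert (σ k) (Tset σ k) := by
  ext i
  simp only [mem_Tset, Finset.mem_insert, Nat.lt_succ_iff_lt_or_eq]
  constructor
  · rintro (h | h)
    · exact Or.inr h
    · left
      have : σ.symm i = k := Fin.ext h
      rw [← this]; simp
  · rintro (rfl | h)
    · right; simp
    · exact Or.inl h

lemma not_mem_Tset_self (σ : Equiv.Perm (Fin n)) (k : Fin n) : σ k ∉ Tset σ k := by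
  simp [mem_Tset]

noncomputable def greedy (F : Finset (Fin n) → ℝ) (σ : Equiv.Perm (Fin n)) : Fin n → ℝ :=
  fun i => F (Tset σ ((σ.symm i : ℕ) + 1)) - F (Tset σ (σ.symm i))

lemma greedy_apply (F : Finset (Fin n) → ℝ) (σ : Equiv.Perm (Fin n)) (k : Fin n) :
    greedy F σ (σ k) = F (Tset σ ((k : ℕ) + 1)) - F (Tset σ (k : ℕ)) := by
  simp [greedy]

lemma telescope (G : ℕ → ℝ) :
    ∑ k : Fin n, (G ((k : ℕ) + 1) - G (k : ℕ)) = G n - G 0 := by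
  rw [Fin.sum_univ_eq_sum_range (fun j => G (j + 1) - G j)]
  exact Finset.sum_range_sub G n

lemma greedy_sum_univ (F : Finset (Fin n) → ℝ) (σ : Equiv.Perm (Fin n)) :
    ∑ i, greedy F σ i = F univ - F ∅ := by
  rw [← Equiv.sum_comp σ (greedy F σ)]
  simp only [greedy_apply]
  rw [telescope (fun m => F (Tset σ m))]
  rw [Tset_ge σ le_rfl, Tset_zero]

lemma greedy_sum_le (F : Finset (Fin n) → ℝ) (hF : ∀ A B : Finset (Fin n),
      F (A ∪ B) + F (A ∩ B) ≤ F A + F B) (hF0 : F ∅ = 0)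
    (σ : Equiv.Perm (Fin n)) (A : Finset (Fin n)) :
    ∑ i ∈ A, greedy F σ i ≤ F A := by
  classical
  have himg : ∑ k ∈ A.image σ.symm, greedy F σ (σ k) = ∑ i ∈ A, greedy F σ i := by
    rw [Finset.sum_image (fun a _ b _ h => σ.symm.injective h)]
    simp
  rw [← himg]
  have hmemA' : ∀ k : Fin n, k ∈ A.image σ.symm ↔ σ k ∈ A := by
    intro k
    simp only [Finset.mem_image]
    constructor
    · rintro ⟨i, hi, rfl⟩; simpa using hi
    · intro h; exact ⟨σ k, h, by simp⟩
  set y : ℕ → ℝ := fun m => F (Tset σ m ∩ A) with hy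
  have hterm : ∀ k ∈ A.image σ.symm,
      greedy F σ (σ k) ≤ y ((k : ℕ) + 1) - y (k : ℕ) := by
    intro k hk
    have hkA : σ k ∈ A := (hmemA' k).1 hk
    have h1 : (Tset σ ((k : ℕ) + 1) ∩ A) ∪ Tset σ (k : ℕ) = Tset σ ((k : ℕ) + 1) := by
      rw [Tset_succ]
      ext i
      simp only [Finset.mem_union, Finset.mem_inter, Finset.mem_insert]
      constructor
      · rintro (⟨h | h, _⟩ | h) <;> tauto
      · rintro (rfl | h) <;> tauto
    have h2 : (Tset σ ((k : ℕ) + 1) ∩ A) ∩ Tset σ (k : ℕ) = Tset σ (k : ℕ) ∩ A := by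
      rw [Tset_succ]
      ext i
      simp only [Finset.mem_inter, Finset.mem_insert]
      constructor
      · rintro ⟨⟨h | h, hA⟩, hT⟩ <;> tauto
      · rintro ⟨hT, hA⟩; tauto
    have := hF (Tset σ ((k : ℕ) + 1) ∩ A) (Tset σ (k : ℕ))
    rw [h1, h2] at this
    rw [greedy_apply]
    simp only [hy]
    linarith
  have hzero : ∀ k ∈ (univ : Finset (Fin n)), k ∉ A.image σ.symm →
      y ((k : ℕ) + 1) - y (k : ℕ) = 0 := by
    intro k _ hk
    have hkA : σ k ∉ A := fun h => hk ((hmemA' k).2 h)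
    have : Tset σ ((k : ℕ) + 1) ∩ A = Tset σ (k : ℕ) ∩ A := by
      rw [Tset_succ]
      ext i
      simp only [Finset.mem_inter, Finset.mem_insert]
      constructor
      · rintro ⟨rfl | h, hA⟩
        · exact absurd hA hkA
        · exact ⟨h, hA⟩
      · rintro ⟨h, hA⟩; tauto
    simp only [hy, this, sub_self]
  calc ∑ k ∈ A.image σ.symm, greedy F σ (σ k)
      ≤ ∑ k ∈ A.image σ.symm, (y ((k : ℕ) + 1) - y (k : ℕ)) := Finset.sum_le_sum hterm
    _ = ∑ k : Fin n, (y ((k : ℕ) + 1) - y (k : ℕ)) :=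
        Finset.sum_subset (Finset.subset_univ _) hzero
    _ = y n - y 0 := telescope y
    _ = F A := by
        simp only [hy, Tset_ge σ le_rfl, Tset_zero, Finset.univ_inter, Finset.empty_inter, hF0]
        ring

lemma greedy_mem (F : Finset (Fin n) → ℝ) (hF : ∀ A B : Finset (Fin n),
      F (A ∪ B) + F (A ∩ B) ≤ F A + F B) (hF0 : F ∅ = 0) (σ : Equiv.Perm (Fin n)) :
    (∑ i, greedy F σ i) = F Finset.univ ∧
      ∀ A : Finset (Fin n), (∑ i ∈ A, greedy F σ i) ≤ F A := by
  refine ⟨?_, greedy_sum_le F hF hF0 σ⟩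
  rw [greedy_sum_univ, hF0, sub_zero]



lemma image_Iic (σ : Equiv.Perm (Fin n)) (k : Fin n) :
    (Finset.Iic k).image σ = Tset σ ((k : ℕ) + 1) := by
  have h : Finset.Iic k = Finset.univ.filter fun i : Fin n => (i : ℕ) < (k : ℕ) + 1 := by
    ext i
    rw [Finset.mem_Iic, Finset.mem_filter]
    simp only [Finset.mem_univ, true_and]
    rw [Fin.le_def]
    omega
  rw [h]; rfl

lemma image_Iio (σ : Equiv.Perm (Fin n)) (k : Fin n) :
    (Finset.Iio k).image σ = Tset σ (k : ℕ) := by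
  have h : Finset.Iio k = Finset.univ.filter fun i : Fin n => (i : ℕ) < (k : ℕ) := by
    ext i
    rw [Finset.mem_Iio, Finset.mem_filter]
    simp only [Finset.mem_univ, true_and]
    rw [Fin.lt_def]
  rw [h]; rfl

lemma lovasz_eq (F : Finset (Fin n) → ℝ) (w : Fin n → ℝ) :
    lovasz F w = ∑ k : Fin n, w (Tuple.sort (fun i => -w i) k) *
      (F (Tset (Tuple.sort fun i => -w i) ((k : ℕ) + 1))
        - F (Tset (Tuple.sort fun i => -w i) (k : ℕ))) := by
  simp only [lovasz, image_Iic, image_Iio]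

lemma lovasz_eq_greedy (F : Finset (Fin n) → ℝ) (w : Fin n → ℝ) :
    lovasz F w = ∑ i, greedy F (Tuple.sort fun i => -w i) i * w i := by
  rw [lovasz_eq, ← Equiv.sum_comp (Tuple.sort fun i => -w i)
    (fun i => greedy F (Tuple.sort fun i => -w i) i * w i)]
  refine Finset.sum_congr rfl fun k _ => ?_
  rw [greedy_apply, mul_comm]

lemma abel_le {a x : ℕ → ℝ} (ha : ∀ j, a (j + 1) ≤ a j) (hx : ∀ m, x m ≤ 0) :
    ∀ N, ∑ j ∈ Finset.range N, a j * (x (j + 1) - x j) ≤ a N * x N - a 0 * x 0 := by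
  intro N
  induction N with
  | zero => simp
  | succ N ih =>
    rw [Finset.sum_range_succ]
    have h1 : a N * x (N + 1) ≤ a (N + 1) * x (N + 1) :=
      mul_le_mul_of_nonpos_right (ha N) (hx (N + 1))
    nlinarith [ih]

lemma inner_le_lovasz (F : Finset (Fin n) → ℝ) (hF0 : F ∅ = 0) {s : Fin n → ℝ}
    (hs : s ∈ basePolytope F) (w : Fin n → ℝ) :
    ∑ i, s i * w i ≤ lovasz F w := by
  rcases Nat.eq_zero_or_pos n with h0 | hn
  · subst h0; simp [lovasz]
  set σ := Tuple.sort (fun i => -w i) with hσ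
  have hmono : ∀ k l : Fin n, k ≤ l → w (σ l) ≤ w (σ k) := by
    intro k l h
    have := Tuple.monotone_sort (fun i => -w i) h
    simp only [Function.comp_apply] at this
    rw [← hσ] at this
    linarith
  set a : ℕ → ℝ := fun j => w (σ ⟨min j (n - 1), by omega⟩) with hadef
  have ha : ∀ j, a (j + 1) ≤ a j := fun j =>
    hmono _ _ (Fin.mk_le_mk.2 (min_le_min (Nat.le_succ j) le_rfl))
  have haeq : ∀ k : Fin n, a (k : ℕ) = w (σ k) := by
    intro k
    have hk := k.isLt
    have hmk : (⟨min (k : ℕ) (n - 1), by omega⟩ : Fin n) = k :=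
      Fin.ext (by simp only []; omega)
    simp only [hadef, hmk]
  set x : ℕ → ℝ := fun m => (∑ i ∈ Tset σ m, s i) - F (Tset σ m) with hxdef
  have hx : ∀ m, x m ≤ 0 := fun m => sub_nonpos.2 (hs.2 _)
  have hx0 : x 0 = 0 := by simp [hxdef, Tset_zero, hF0]
  have hxn : x n = 0 := by simp [hxdef, Tset_ge σ le_rfl, hs.1]
  have key : ∑ j ∈ Finset.range n, a j * (x (j + 1) - x j) ≤ 0 := by
    have h := abel_le ha hx n
    rw [hx0, hxn] at h
    simpa using h
  have hfin : ∑ k : Fin n, w (σ k) * (x ((k : ℕ) + 1) - x (k : ℕ))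
      = ∑ j ∈ Finset.range n, a j * (x (j + 1) - x j) := by
    rw [← Fin.sum_univ_eq_sum_range (fun j => a j * (x (j + 1) - x j))]
    exact Finset.sum_congr rfl fun k _ => by rw [haeq]
  have hstep : ∀ k : Fin n, x ((k : ℕ) + 1) - x (k : ℕ)
      = s (σ k) - (F (Tset σ ((k : ℕ) + 1)) - F (Tset σ (k : ℕ))) := by
    intro k
    simp only [hxdef]
    rw [Tset_succ, Finset.sum_insert (not_mem_Tset_self σ k)]
    ring
  have hexp : ∑ k : Fin n, w (σ k) * (x ((k : ℕ) + 1) - x (k : ℕ))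
      = (∑ i, s i * w i) - lovasz F w := by
    rw [lovasz_eq]
    rw [← Equiv.sum_comp σ (fun i => s i * w i)]
    rw [← Finset.sum_sub_distrib]
    refine Finset.sum_congr rfl fun k _ => ?_
    rw [hstep]
    ring
  linarith [key, hfin, hexp]

lemma sum_sq_identity (s u w : Fin n → ℝ) :
    (∑ i, s i * w i) - (∑ i, u i * w i) + (1/2) * ∑ i, (w i)^2
      = (1/2) * ∑ i, (w i - (u i - s i))^2 - (1/2) * ∑ i, (s i - u i)^2 := by
  rw [Finset.mul_sum, Finset.mul_sum, Finset.mul_sum, ← Finset.sum_sub_distrib,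
    ← Finset.sum_sub_distrib, ← Finset.sum_add_distrib]
  exact Finset.sum_congr rfl fun i _ => by ring

lemma primal_ge (F : Finset (Fin n) → ℝ) (hF0 : F ∅ = 0) {s : Fin n → ℝ}
    (hs : s ∈ basePolytope F) (u w : Fin n → ℝ) :
    -(1/2) * ∑ i, (s i - u i)^2 + (1/2) * ∑ i, (w i - (u i - s i))^2
      ≤ lovasz F w - (∑ i, u i * w i) + (1/2) * ∑ i, (w i)^2 := by
  have h1 := inner_le_lovasz F hF0 hs w
  have h2 := sum_sq_identity s u w
  linarith

lemma bp_convex (F : Finset (Fin n) → ℝ) : Convex ℝ (basePolytope F) := by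
  rintro s hs t ht a b ha hb hab
  constructor
  · have : ∑ i, (a • s + b • t) i = a * (∑ i, s i) + b * (∑ i, t i) := by
      simp only [Pi.add_apply, Pi.smul_apply, smul_eq_mul]
      rw [Finset.sum_add_distrib, Finset.mul_sum, Finset.mul_sum]
    rw [this, hs.1, ht.1, ← add_mul, hab, one_mul]
  · intro A
    have : ∑ i ∈ A, (a • s + b • t) i = a * (∑ i ∈ A, s i) + b * (∑ i ∈ A, t i) := by
      simp only [Pi.add_apply, Pi.smul_apply, smul_eq_mul]
      rw [Finset.sum_add_distrib, Finset.mul_sum, Finset.mul_sum]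
    rw [this]
    calc a * (∑ i ∈ A, s i) + b * (∑ i ∈ A, t i) ≤ a * F A + b * F A :=
          add_le_add (mul_le_mul_of_nonneg_left (hs.2 A) ha)
            (mul_le_mul_of_nonneg_left (ht.2 A) hb)
      _ = F A := by rw [← add_mul, hab, one_mul]

lemma bp_closed (F : Finset (Fin n) → ℝ) : IsClosed (basePolytope F) := by
  have h : basePolytope F = {s : Fin n → ℝ | ∑ i, s i = F Finset.univ} ∩
      ⋂ A : Finset (Fin n), {s : Fin n → ℝ | ∑ i ∈ A, s i ≤ F A} := by
    ext s
    simp [basePolytope, Set.mem_iInter]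
  rw [h]
  refine IsClosed.inter (isClosed_eq ?_ continuous_const)
    (isClosed_iInter fun A => isClosed_le ?_ continuous_const)
  · exact continuous_finset_sum _ fun i _ => continuous_apply i
  · exact continuous_finset_sum _ fun i _ => continuous_apply i

lemma bp_compact (F : Finset (Fin n) → ℝ) : IsCompact (basePolytope F) := by
  classical
  refine IsCompact.of_isClosed_subset (isCompact_univ_pi
    fun i => isCompact_Icc (a := F Finset.univ - F (Finset.univ.erase i)) (b := F {i}))
    (bp_closed F) ?_
  intro s hs
  intro i _
  constructor
  · have h1 := hs.2 (Finset.univ.erase i)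
    have h2 : ∑ j ∈ Finset.univ.erase i, s j + s i = ∑ j, s j :=
      Finset.sum_erase_add _ _ (Finset.mem_univ i)
    have h3 := hs.1
    linarith
  · have h := hs.2 {i}
    rwa [Finset.sum_singleton] at h

lemma exists_proj (F : Finset (Fin n) → ℝ) (hF : Submodular F) (hF0 : F ∅ = 0)
    (u : Fin n → ℝ) : ∃ s ∈ basePolytope F, ∀ t ∈ basePolytope F,
      ∑ i, (s i - u i)^2 ≤ ∑ i, (t i - u i)^2 := by
  have hne : (basePolytope F).Nonempty :=
    ⟨greedy F (Equiv.refl (Fin n)), greedy_mem F hF hF0 (Equiv.refl (Fin n))⟩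
  have hcont : Continuous fun s : Fin n → ℝ => ∑ i, (s i - u i)^2 :=
    continuous_finset_sum _ fun i _ => ((continuous_apply i).sub continuous_const).pow 2
  obtain ⟨s, hsm, hmin⟩ := (bp_compact F).exists_isMinOn hne hcont.continuousOn
  exact ⟨s, hsm, fun t ht => hmin ht⟩

lemma var_ineq (F : Finset (Fin n) → ℝ) (u : Fin n → ℝ) {s t : Fin n → ℝ}
    (hs : s ∈ basePolytope F)
    (hmin : ∀ t' ∈ basePolytope F, ∑ i, (s i - u i)^2 ≤ ∑ i, (t' i - u i)^2)
    (ht : t ∈ basePolytope F) :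
    ∑ i, (u i - s i) * (t i - s i) ≤ 0 := by
  by_contra hcon
  push_neg at hcon
  set c := ∑ i, (u i - s i) * (t i - s i) with hc
  set d := ∑ i, (t i - s i)^2 with hd
  have hd0 : 0 ≤ d := Finset.sum_nonneg fun i _ => sq_nonneg _
  have hstep : ∀ θ : ℝ, 0 ≤ θ → θ ≤ 1 → 2 * θ * c ≤ θ^2 * d := by
    intro θ h0 h1
    have hp : (fun i => s i + θ * (t i - s i)) ∈ basePolytope F := by
      have hconv := bp_convex F hs ht (a := 1 - θ) (b := θ) (by linarith) h0 (by ring)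
      have heq : (1 - θ) • s + θ • t = fun i => s i + θ * (t i - s i) := by
        funext i
        simp only [Pi.add_apply, Pi.smul_apply, smul_eq_mul]
        ring
      rwa [heq] at hconv
    have hle := hmin _ hp
    have hexp : ∑ i, (s i + θ * (t i - s i) - u i)^2
        = ∑ i, (s i - u i)^2 - 2 * θ * c + θ^2 * d := by
      simp only [hc, hd, Finset.mul_sum]
      rw [← Finset.sum_sub_distrib, ← Finset.sum_add_distrib]
      exact Finset.sum_congr rfl fun i _ => by ring
    rw [hexp] at hle
    linarith
  rcases lt_or_ge 0 d with hdpos | hdnp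
  · set θ := min 1 (c / d) with hθ
    have hθ0 : 0 < θ := lt_min one_pos (div_pos hcon hdpos)
    have hθ1 : θ ≤ 1 := min_le_left _ _
    have hθcd : θ ≤ c / d := min_le_right _ _
    have h1 := hstep θ hθ0.le hθ1
    have h2 : θ * d ≤ c := by
      rw [← div_mul_cancel₀ c (ne_of_gt hdpos)]
      exact mul_le_mul_of_nonneg_right hθcd hdpos.le
    nlinarith
  · have hdz : d = 0 := le_antisymm hdnp hd0
    have := hstep 1 zero_le_one le_rfl
    rw [hdz] at this
    nlinarith

lemma lovasz_proj (F : Finset (Fin n) → ℝ) (hF : Submodular F) (hF0 : F ∅ = 0)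
    (u : Fin n → ℝ) {s : Fin n → ℝ} (hsB : s ∈ basePolytope F)
    (hsmin : ∀ t ∈ basePolytope F, ∑ i, (s i - u i)^2 ≤ ∑ i, (t i - u i)^2) :
    lovasz F (u - s) = ∑ i, s i * (u - s) i := by
  have hub := inner_le_lovasz F hF0 hsB (u - s)
  refine le_antisymm ?_ hub
  rw [lovasz_eq_greedy F (u - s)]
  have hgm : greedy F (Tuple.sort fun i => -(u - s) i) ∈ basePolytope F :=
    greedy_mem F hF hF0 _
  have hvi := var_ineq F u hsB hsmin hgm
  have hdiff : ∑ i, greedy F (Tuple.sort fun i => -(u - s) i) i * (u - s) i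
      - ∑ i, s i * (u - s) i
      = ∑ i, (u i - s i) * (greedy F (Tuple.sort fun i => -(u - s) i) i - s i) := by
    rw [← Finset.sum_sub_distrib]
    exact Finset.sum_congr rfl fun i _ => by simp only [Pi.sub_apply]; ring
  linarith

lemma g_proj (F : Finset (Fin n) → ℝ) (hF : Submodular F) (hF0 : F ∅ = 0)
    (u : Fin n → ℝ) {s : Fin n → ℝ} (hsB : s ∈ basePolytope F)
    (hsmin : ∀ t ∈ basePolytope F, ∑ i, (s i - u i)^2 ≤ ∑ i, (t i - u i)^2) :
    lovasz F (u - s) - (∑ i, u i * (u - s) i) + (1/2) * ∑ i, ((u - s) i)^2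
      = -(1/2) * ∑ i, (s i - u i)^2 := by
  rw [lovasz_proj F hF hF0 u hsB hsmin]
  have h := sum_sq_identity s u (u - s)
  have hz : ∑ i, ((u - s) i - (u i - s i))^2 = 0 :=
    Finset.sum_eq_zero fun i _ => by simp [Pi.sub_apply]
  linarith

end TVDual


open TVDual in
/-- Total variation denoising duality: the primal TV problem equals the (negated)
squared distance problem over the base polytope, the minimizer is unique, and the
optima are related by `w = u - s`, i.e. `w = u - Π_{B(F)}(u)`. -/
theorem tv_duality {n : ℕ} (F : Finset (Fin n) → ℝ)
    (hF : Submodular F) (hF0 : F ∅ = 0) (u : Fin n → ℝ) :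
    sInf {x : ℝ | ∃ w : Fin n → ℝ,
        x = lovasz F w - (∑ i, u i * w i) + (1/2) * ∑ i, (w i)^2}
      = sSup {x : ℝ | ∃ s ∈ basePolytope F, x = -(1/2) * ∑ i, (s i - u i)^2} ∧
    (∃! w : Fin n → ℝ, ∀ w' : Fin n → ℝ,
        lovasz F w - (∑ i, u i * w i) + (1/2) * ∑ i, (w i)^2
          ≤ lovasz F w' - (∑ i, u i * w' i) + (1/2) * ∑ i, (w' i)^2) ∧
    ∀ w s : Fin n → ℝ,
      (∀ w' : Fin n → ℝ,
        lovasz F w - (∑ i, u i * w i) + (1/2) * ∑ i, (w i)^2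
          ≤ lovasz F w' - (∑ i, u i * w' i) + (1/2) * ∑ i, (w' i)^2) →
      s ∈ basePolytope F →
      (∀ s' ∈ basePolytope F, (∑ i, (s i - u i)^2) ≤ ∑ i, (s' i - u i)^2) →
      w = u - s := by
  classical
  obtain ⟨sstar, hsB, hsmin⟩ := exists_proj F hF hF0 u
  have hgproj := g_proj F hF hF0 u hsB hsmin
  have hPD : ∀ (w' : Fin n → ℝ) (s' : Fin n → ℝ), s' ∈ basePolytope F →
      -(1/2) * ∑ i, (s' i - u i)^2
        ≤ lovasz F w' - (∑ i, u i * w' i) + (1/2) * ∑ i, (w' i)^2 := by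
    intro w' s' hs'
    have h1 := primal_ge F hF0 hs' u w'
    have h2 : (0:ℝ) ≤ ∑ i, (w' i - (u i - s' i))^2 :=
      Finset.sum_nonneg fun i _ => sq_nonneg _
    linarith
  have hmin_ws : ∀ w' : Fin n → ℝ,
      lovasz F (u - sstar) - (∑ i, u i * (u - sstar) i) + (1/2) * ∑ i, ((u - sstar) i)^2
        ≤ lovasz F w' - (∑ i, u i * w' i) + (1/2) * ∑ i, (w' i)^2 := by
    intro w'
    rw [hgproj]
    exact hPD w' sstar hsB
  have huniq : ∀ w : Fin n → ℝ,
      (∀ w' : Fin n → ℝ,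
        lovasz F w - (∑ i, u i * w i) + (1/2) * ∑ i, (w i)^2
          ≤ lovasz F w' - (∑ i, u i * w' i) + (1/2) * ∑ i, (w' i)^2) →
      ∀ s : Fin n → ℝ, s ∈ basePolytope F →
      (∀ t ∈ basePolytope F, (∑ i, (s i - u i)^2) ≤ ∑ i, (t i - u i)^2) →
      w = u - s := by
    intro w hw s hs hsm
    have h1 := hw (u - s)
    have h2 := primal_ge F hF0 hs u w
    have h3 := g_proj F hF hF0 u hs hsm
    have hz : ∑ i, (w i - (u i - s i))^2 ≤ 0 := by linarith
    have hz' : ∑ i, (w i - (u i - s i))^2 = 0 :=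
      le_antisymm hz (Finset.sum_nonneg fun i _ => sq_nonneg _)
    funext i
    have := (Finset.sum_eq_zero_iff_of_nonneg
      (fun i _ => sq_nonneg (w i - (u i - s i)))).1 hz' i (Finset.mem_univ i)
    have h4 : w i - (u i - s i) = 0 := by
      have := sq_eq_zero_iff.1 this
      exact this
    simp only [Pi.sub_apply]
    linarith
  refine ⟨?_, ⟨u - sstar, hmin_ws, fun w hw => huniq w hw sstar hsB hsmin⟩,
    fun w s hw hs hsm => huniq w hw s hs hsm⟩
  set P := {x : ℝ | ∃ w : Fin n → ℝ,
      x = lovasz F w - (∑ i, u i * w i) + (1/2) * ∑ i, (w i)^2} with hP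
  set D := {x : ℝ | ∃ s ∈ basePolytope F, x = -(1/2) * ∑ i, (s i - u i)^2} with hD
  have hPmem : lovasz F (u - sstar) - (∑ i, u i * (u - sstar) i)
      + (1/2) * ∑ i, ((u - sstar) i)^2 ∈ P := ⟨u - sstar, rfl⟩
  have hDmem : -(1/2) * ∑ i, (sstar i - u i)^2 ∈ D := ⟨sstar, hsB, rfl⟩
  have hbddP : BddBelow P := by
    refine ⟨-(1/2) * ∑ i, (sstar i - u i)^2, ?_⟩
    rintro x ⟨w', rfl⟩
    exact hPD w' sstar hsB
  have hbddD : BddAbove D := by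
    refine ⟨lovasz F (u - sstar) - (∑ i, u i * (u - sstar) i)
      + (1/2) * ∑ i, ((u - sstar) i)^2, ?_⟩
    rintro y ⟨s', hs', rfl⟩
    exact hPD (u - sstar) s' hs'
  refine le_antisymm ?_ ?_
  · calc sInf P ≤ lovasz F (u - sstar) - (∑ i, u i * (u - sstar) i)
        + (1/2) * ∑ i, ((u - sstar) i)^2 := csInf_le hbddP hPmem
      _ = -(1/2) * ∑ i, (sstar i - u i)^2 := hgproj
      _ ≤ sSup D := le_csSup hbddD hDmem
  · refine csSup_le ⟨_, hDmem⟩ fun y hy => le_csInf ⟨_, hPmem⟩ fun x hx => ?_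
    obtain ⟨s', hs', rfl⟩ := hy
    obtain ⟨w', rfl⟩ := hx
    exact hPD w' s' hs'
end

section
/- The support function of the tangent cone of an ordered partition equals the Lovász extension on compatible vectors and is +∞ otherwise: sup_{s ∈ B̂^𝒜(F)} wᵀs = f(w) if w ∈ 𝒲^𝒜, and = +∞ otherwise. -/
open Finset

/-- `B i = A 0 ∪ ... ∪ A i` : prefix union of an ordered partition. -/
def prefixUnion {n m : ℕ} (A : Fin m → Finset (Fin n)) (i : Fin m) : Finset (Fin n) :=
  (Finset.Iic i).biUnion A

/-- `B (i-1) = A 0 ∪ ... ∪ A (i-1)` : strict prefix union. -/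
def prefixUnion' {n m : ℕ} (A : Fin m → Finset (Fin n)) (i : Fin m) : Finset (Fin n) :=
  (Finset.Iio i).biUnion A

/-- `A` is an ordered partition of the ground set `Fin n` into nonempty parts. -/
def IsOrderedPartition {n m : ℕ} (A : Fin m → Finset (Fin n)) : Prop :=
  (∀ i, (A i).Nonempty) ∧ (∀ i j, i ≠ j → Disjoint (A i) (A j)) ∧
    Finset.univ.biUnion A = Finset.univ

/-- The tangent cone (outer approximation of the base polytope) associated with an
ordered partition: only the prefix-union constraints `s(B i) ≤ F(B i)`, `i < m-1`,
together with `s(V) = F(V)`. -/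
def tangentCone {n m : ℕ} (F : Finset (Fin n) → ℝ) (A : Fin m → Finset (Fin n)) :
    Set (Fin n → ℝ) :=
  {s | (∑ i, s i) = F Finset.univ ∧
    ∀ i : Fin m, (i : ℕ) < m - 1 →
      (∑ j ∈ prefixUnion A i, s j) ≤ F (prefixUnion A i)}

/-- Vectors compatible with an ordered partition. -/
def compatible {n m : ℕ} (A : Fin m → Finset (Fin n)) : Set (Fin n → ℝ) :=
  {w | ∃ v : Fin m → ℝ, (∀ i j : Fin m, i ≤ j → v j ≤ v i) ∧
    w = fun p => ∑ i, if p ∈ A i then v i else 0}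

/-! The greedy point of the permutation sorting `w` decreasingly lies in the tangent cone (by
submodularity it satisfies `s(C) ≤ F(C)` for every `C`) and attains `lovasz F w`. If
`w = ∑ᵢ vᵢ 1_{Aᵢ}` with `v` antitone, summation by parts writes `w ⬝ᵥ s` as
`v_{m-1} s(V) + ∑ₖ (vₖ - vₖ₊₁) s(Bₖ)`. Whenever `vₖ > vₖ₊₁`, `Bₖ` is an upper level set of `w`,
on which the greedy point is tight, so no point of the cone does better. If `w` is not
compatible, some `q` in a part not after that of `p` has `w q < w p`; moving mass from `q` to `p`
stays in the cone and increases `w ⬝ᵥ s` without bound. -/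

theorem Submodular.sub_le_sub_insert {n : ℕ} {F : Finset (Fin n) → ℝ} (hF : Submodular F)
    {S T : Finset (Fin n)} (hST : S ⊆ T) {x : Fin n} (hx : x ∉ T) :
    F (insert x T) - F T ≤ F (insert x S) - F S := by
  have hunion : insert x S ∪ T = insert x T := by
    rw [insert_union, union_eq_right.mpr hST]
  have hinter : insert x S ∩ T = S := by
    rw [insert_inter_of_notMem hx, inter_eq_left.mpr hST]
  linarith [hunion ▸ hinter ▸ hF (insert x S) T]

section GreedyPoint

variable {n : ℕ} (σ : Equiv.Perm (Fin n))

def permPrefix (j : ℕ) : Finset (Fin n) :=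
  {p | (σ.symm p : ℕ) < j}

variable {σ} in
@[simp]
theorem mem_permPrefix {p : Fin n} {j : ℕ} : p ∈ permPrefix σ j ↔ (σ.symm p : ℕ) < j := by
  simp [permPrefix]

theorem permPrefix_succ (a : Fin n) :
    permPrefix σ (a + 1) = insert (σ a) (permPrefix σ a) := by
  ext p
  rw [mem_insert, mem_permPrefix, mem_permPrefix, Nat.lt_succ_iff, le_iff_eq_or_lt, Fin.val_inj,
    Equiv.symm_apply_eq]

theorem image_Iio_eq_permPrefix (a : Fin n) : (Iio a).image σ = permPrefix σ a := by
  ext p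
  simp only [mem_image, ← Equiv.eq_symm_apply, exists_eq_right, mem_Iio, mem_permPrefix,
    Fin.lt_def]

theorem image_Iic_eq_permPrefix (a : Fin n) : (Iic a).image σ = permPrefix σ (a + 1) := by
  ext p
  simp only [mem_image, ← Equiv.eq_symm_apply, exists_eq_right, mem_Iic, mem_permPrefix,
    Fin.le_def, Nat.lt_succ_iff]

theorem sum_sub_permPrefix (G : Finset (Fin n) → ℝ) :
    ∑ a : Fin n, (G (permPrefix σ (a + 1)) - G (permPrefix σ a)) = G univ - G ∅ := by
  rw [Fin.sum_univ_eq_sum_range (fun j => G (permPrefix σ (j + 1)) - G (permPrefix σ j)),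
    sum_range_sub (fun j => G (permPrefix σ j))]
  congr 2 <;> ext p <;> simp

variable (F : Finset (Fin n) → ℝ)

def greedyPoint (p : Fin n) : ℝ :=
  F (permPrefix σ (σ.symm p + 1)) - F (permPrefix σ (σ.symm p))

theorem sum_greedyPoint (C : Finset (Fin n)) :
    ∑ p ∈ C, greedyPoint σ F p =
      ∑ a : Fin n, if σ a ∈ C then F (permPrefix σ (a + 1)) - F (permPrefix σ a) else 0 := by
  rw [← univ_inter C, ← sum_ite_mem, ← Equiv.sum_comp σ]
  simp [greedyPoint]

theorem sum_greedyPoint_le {F} (hF : Submodular F) (C : Finset (Fin n)) :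
    ∑ p ∈ C, greedyPoint σ F p ≤ F C - F ∅ := by
  -- telescope `F (· ∩ C)` along the prefixes of `σ`; each step is diminishing returns
  have htel := sum_sub_permPrefix σ (fun B => F (B ∩ C))
  simp only [univ_inter, empty_inter] at htel
  rw [sum_greedyPoint, ← htel]
  gcongr with a
  rw [permPrefix_succ]
  have ha : σ a ∉ permPrefix σ a := by simp
  split_ifs with haC
  · rw [insert_inter_of_mem haC]
    exact hF.sub_le_sub_insert inter_subset_left ha
  · rw [insert_inter_of_notMem haC, sub_self]

theorem sum_greedyPoint_of_lowerSet {B : Finset (Fin n)}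
    (hB : ∀ a b : Fin n, b ≤ a → σ a ∈ B → σ b ∈ B) :
    ∑ p ∈ B, greedyPoint σ F p = F B - F ∅ := by
  have htel := sum_sub_permPrefix σ (fun X => F (X ∩ B))
  simp only [univ_inter, empty_inter] at htel
  rw [sum_greedyPoint, ← htel]
  refine sum_congr rfl fun a _ => ?_
  split_ifs with haB
  · have hsub : ∀ j : ℕ, j ≤ a + 1 → permPrefix σ j ⊆ B := fun j hj p hp => by
      rw [mem_permPrefix] at hp
      simpa using hB a (σ.symm p) (Fin.le_def.mpr (by omega)) haB
    rw [inter_eq_left.mpr (hsub _ le_rfl), inter_eq_left.mpr (hsub _ (by omega))]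
  · have hsub : ∀ j : ℕ, a ≤ j → B ⊆ permPrefix σ j := fun j hj p hp => by
      by_contra hpj
      rw [mem_permPrefix, not_lt] at hpj
      exact haB (hB (σ.symm p) a (Fin.le_def.mpr (by omega)) (by simpa))
    rw [inter_eq_right.mpr (hsub _ (by omega)), inter_eq_right.mpr (hsub _ le_rfl), sub_self]

end GreedyPoint

theorem lovasz_eq_dotProduct_greedyPoint {n : ℕ} (F : Finset (Fin n) → ℝ) (w : Fin n → ℝ) :
    lovasz F w = w ⬝ᵥ greedyPoint (Tuple.sort fun i => -w i) F := by
  set σ := Tuple.sort fun i => -w i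
  rw [dotProduct, ← Equiv.sum_comp σ]
  simp [lovasz, σ, greedyPoint, image_Iic_eq_permPrefix, image_Iio_eq_permPrefix]

theorem sum_greedyPoint_sort_of_lt {n : ℕ} (F : Finset (Fin n) → ℝ) {w : Fin n → ℝ}
    {B : Finset (Fin n)} (hB : ∀ p ∈ B, ∀ q ∉ B, w q < w p) :
    ∑ p ∈ B, greedyPoint (Tuple.sort fun i => -w i) F p = F B - F ∅ := by
  refine sum_greedyPoint_of_lowerSet _ F fun a b hba ha => ?_
  by_contra hb
  have hsorted : -w (Tuple.sort (fun i => -w i) b) ≤ -w (Tuple.sort (fun i => -w i) a) :=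
    Tuple.monotone_sort (fun i => -w i) hba
  linarith [hB _ ha _ hb]

theorem greedyPoint_mem_tangentCone {n m : ℕ} {F : Finset (Fin n) → ℝ} (hF : Submodular F)
    (hF0 : F ∅ = 0) (A : Fin m → Finset (Fin n)) (σ : Equiv.Perm (Fin n)) :
    greedyPoint σ F ∈ tangentCone F A := by
  refine ⟨?_, fun k _ => ?_⟩
  · rw [sum_greedyPoint_of_lowerSet σ F fun _ _ _ _ => mem_univ _, hF0, sub_zero]
  · simpa [hF0] using sum_greedyPoint_le σ hF (prefixUnion A k)

theorem sum_range_mul_nonpos_of_sum_Iic_nonpos {v x : ℕ → ℝ} {m : ℕ}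
    (hx : ∑ i ∈ range m, x i = 0) (hv : ∀ i, i + 1 < m → v (i + 1) ≤ v i)
    (hpartial : ∀ i, i + 1 < m → v (i + 1) < v i → ∑ j ∈ Iic i, x j ≤ 0) :
    ∑ i ∈ range m, v i * x i ≤ 0 := by
  have habel := sum_range_by_parts v x m
  simp only [smul_eq_mul, Nat.range_succ_eq_Iic] at habel
  rw [habel, hx, mul_zero, zero_sub, neg_nonpos]
  refine sum_nonneg fun i hi => ?_
  have hi : i + 1 < m := by rw [mem_range] at hi; omega
  rcases (hv i hi).lt_or_eq with hlt | heq
  · exact mul_nonneg_of_nonpos_of_nonpos (by linarith) (hpartial i hi hlt)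
  · rw [heq, sub_self, zero_mul]

theorem Fin.sum_mul_nonpos_of_sum_Iic_nonpos {m : ℕ} {v x : Fin m → ℝ} (hv : Antitone v)
    (hx : ∑ i, x i = 0)
    (hpartial : ∀ k : Fin m, (k : ℕ) < m - 1 → (∀ j, k < j → v j < v k) → ∑ i ∈ Iic k, x i ≤ 0) :
    ∑ i, v i * x i ≤ 0 := by
  let extend (f : Fin m → ℝ) (j : ℕ) : ℝ := if h : j < m then f ⟨j, h⟩ else 0
  have hextend (f : Fin m → ℝ) (i : Fin m) : extend f i = f i := dif_pos i.isLt
  have hsum_Iic (f : Fin m → ℝ) (k : Fin m) :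
      ∑ i ∈ Iic k, f i = ∑ j ∈ Iic (k : ℕ), extend f j := by
    rw [← Fin.map_valEmbedding_Iic, sum_map]
    exact sum_congr rfl fun i _ => (hextend f i).symm
  have hsum (f : Fin m → ℝ) : ∑ i, f i = ∑ j ∈ range m, extend f j := by
    rw [← Fin.sum_univ_eq_sum_range]
    exact sum_congr rfl fun i _ => (hextend f i).symm
  calc ∑ i, v i * x i = ∑ j ∈ range m, extend v j * extend x j := by
        rw [← Fin.sum_univ_eq_sum_range]; simp only [hextend]
    _ ≤ 0 := by
      refine sum_range_mul_nonpos_of_sum_Iic_nonpos (by rw [← hsum, hx]) (fun i hi => ?_)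
        (fun i hi hlt => ?_)
      · simp only [extend, dif_pos hi, dif_pos (show i < m by omega)]
        exact hv (Fin.le_def.mpr (Nat.le_succ i))
      · simp only [extend, dif_pos hi, dif_pos (show i < m by omega)] at hlt
        have hIic := hsum_Iic x ⟨i, by omega⟩
        rw [Fin.val_mk] at hIic
        rw [← hIic]
        refine hpartial _ (by simp only; omega) fun j hj => ?_
        exact (hv (show (⟨i + 1, hi⟩ : Fin m) ≤ j from Fin.lt_def.mp hj)).trans_lt hlt

section OrderedPartition

open Function

variable {n m : ℕ} {A : Fin m → Finset (Fin n)}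

theorem sum_ite_mem_eq_of_mem (hA : Pairwise (Disjoint on A)) (v : Fin m → ℝ) {p : Fin n}
    {i : Fin m} (hp : p ∈ A i) : (∑ j, if p ∈ A j then v j else 0) = v i := by
  refine (sum_eq_single i (fun j _ hji => if_neg fun hpj => ?_) (by simp)).trans (if_pos hp)
  exact disjoint_left.mp (hA hji) hpj hp

theorem mem_prefixUnion_iff (hA : Pairwise (Disjoint on A)) {p : Fin n} {i k : Fin m}
    (hp : p ∈ A i) : p ∈ prefixUnion A k ↔ i ≤ k := by
  refine ⟨fun hk => ?_, fun hik => mem_biUnion.mpr ⟨i, mem_Iic.mpr hik, hp⟩⟩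
  obtain ⟨j, hjk, hpj⟩ := mem_biUnion.mp hk
  obtain rfl : j = i := by_contra fun hji => disjoint_left.mp (hA hji) hpj hp
  exact mem_Iic.mp hjk

theorem IsOrderedPartition.exists_mem (hA : IsOrderedPartition A) (p : Fin n) :
    ∃ i, p ∈ A i := by
  have hp : p ∈ univ.biUnion A := hA.2.2 ▸ mem_univ p
  simpa using hp

theorem dotProduct_eq_sum_mul_sum (v : Fin m → ℝ) (d : Fin n → ℝ) :
    (fun p => ∑ i, if p ∈ A i then v i else 0) ⬝ᵥ d = ∑ i, v i * ∑ p ∈ A i, d p := by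
  simp only [dotProduct, sum_mul, ite_mul, zero_mul]
  rw [sum_comm]
  simp [sum_ite_mem, mul_sum]

theorem IsOrderedPartition.dotProduct_le_dotProduct (hA : IsOrderedPartition A)
    {v : Fin m → ℝ} (hv : Antitone v) {s t : Fin n → ℝ} (huniv : ∑ p, s p = ∑ p, t p)
    (hprefix : ∀ k : Fin m, (k : ℕ) < m - 1 → (∀ j, k < j → v j < v k) →
      ∑ p ∈ prefixUnion A k, s p ≤ ∑ p ∈ prefixUnion A k, t p) :
    (fun p => ∑ i, if p ∈ A i then v i else 0) ⬝ᵥ s ≤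
      (fun p => ∑ i, if p ∈ A i then v i else 0) ⬝ᵥ t := by
  have hsum_biUnion (I : Finset (Fin m)) :
      ∑ p ∈ I.biUnion A, (s - t) p = ∑ i ∈ I, ∑ p ∈ A i, (s - t) p :=
    sum_biUnion (Pairwise.set_pairwise hA.2.1 _)
  rw [← sub_nonpos, ← dotProduct_sub, dotProduct_eq_sum_mul_sum]
  refine Fin.sum_mul_nonpos_of_sum_Iic_nonpos hv ?_ fun k hk hlt => ?_
  · rw [← hsum_biUnion, hA.2.2, Pi.sub_def, sum_sub_distrib, huniv, sub_self]
  · rw [← hsum_biUnion, Pi.sub_def, sum_sub_distrib, sub_nonpos]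
    exact hprefix k hk hlt

theorem IsOrderedPartition.lt_of_mem_prefixUnion (hA : IsOrderedPartition A) {v : Fin m → ℝ}
    (hv : Antitone v) {k : Fin m} (hk : ∀ j, k < j → v j < v k) {p q : Fin n}
    (hp : p ∈ prefixUnion A k) (hq : q ∉ prefixUnion A k) :
    (∑ i, if q ∈ A i then v i else 0) < ∑ i, if p ∈ A i then v i else 0 := by
  obtain ⟨i, hpi⟩ := hA.exists_mem p
  obtain ⟨j, hqj⟩ := hA.exists_mem q
  rw [sum_ite_mem_eq_of_mem hA.2.1 v hpi, sum_ite_mem_eq_of_mem hA.2.1 v hqj]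
  rw [mem_prefixUnion_iff hA.2.1 hpi] at hp
  rw [mem_prefixUnion_iff hA.2.1 hqj, not_le] at hq
  exact (hk j hq).trans_le (hv hp)

theorem IsOrderedPartition.exists_lt_of_notMem_compatible (hA : IsOrderedPartition A)
    {w : Fin n → ℝ} (hw : w ∉ compatible A) :
    ∃ p q, (∀ k, p ∈ prefixUnion A k → q ∈ prefixUnion A k) ∧ w q < w p := by
  by_contra! h
  have hne := hA.1
  have hdisj := hA.2.1
  have hle {i j : Fin m} {p q : Fin n} (hji : j ≤ i) (hp : p ∈ A i) (hq : q ∈ A j) :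
      w p ≤ w q :=
    h p q fun k hk =>
      (mem_prefixUnion_iff hdisj hq).2 (hji.trans ((mem_prefixUnion_iff hdisj hp).1 hk))
  refine hw ⟨fun i => w (hne i).choose,
    fun i j hij => hle hij (hne j).choose_spec (hne i).choose_spec, funext fun p => ?_⟩
  obtain ⟨i, hp⟩ := hA.exists_mem p
  rw [sum_ite_mem_eq_of_mem hdisj _ hp]
  exact le_antisymm (hle le_rfl hp (hne i).choose_spec) (hle le_rfl (hne i).choose_spec hp)

end OrderedPartition

theorem not_bddAbove_image_dotProduct {ι : Type*} [Fintype ι] {S : Set (ι → ℝ)}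
    {s d w : ι → ℝ} (hray : ∀ t : ℝ, 0 ≤ t → s + t • d ∈ S) (hd : 0 < w ⬝ᵥ d) :
    ¬BddAbove ((w ⬝ᵥ ·) '' S) := by
  rw [not_bddAbove_iff]
  intro x
  refine ⟨_, ⟨_, hray ((|x - w ⬝ᵥ s| + 1) / (w ⬝ᵥ d)) (by positivity), rfl⟩, ?_⟩
  dsimp only
  rw [dotProduct_add, dotProduct_smul, smul_eq_mul, div_mul_cancel₀ _ hd.ne']
  linarith [le_abs_self (x - w ⬝ᵥ s)]

theorem add_smul_single_sub_single_mem_tangentCone {n m : ℕ} {F : Finset (Fin n) → ℝ}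
    {A : Fin m → Finset (Fin n)} {s : Fin n → ℝ} (hs : s ∈ tangentCone F A) {p q : Fin n}
    (hpq : ∀ k, p ∈ prefixUnion A k → q ∈ prefixUnion A k) {t : ℝ} (ht : 0 ≤ t) :
    s + t • (Pi.single p 1 - Pi.single q 1 : Fin n → ℝ) ∈ tangentCone F A := by
  have hsum (C : Finset (Fin n)) :
      ∑ r ∈ C, (s + t • (Pi.single p 1 - Pi.single q 1 : Fin n → ℝ)) r =
        ∑ r ∈ C, s r + t * ((if p ∈ C then 1 else 0) - if q ∈ C then 1 else 0) := by
    simp [sum_add_distrib, ← mul_sum, sum_sub_distrib, sum_pi_single']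
  refine ⟨by rw [hsum]; simp [hs.1], fun k hk => ?_⟩
  rw [hsum]
  have hle := hs.2 k hk
  by_cases hp : p ∈ prefixUnion A k
  · simpa [hp, hpq k hp] using hle
  · split_ifs <;> nlinarith

/-- The support function of the tangent cone of an ordered partition equals the Lovász
extension on compatible vectors, and is `+∞` (unbounded) otherwise. -/
theorem suppFunction_tangentCone {n m : ℕ} (F : Finset (Fin n) → ℝ)
    (hF : Submodular F) (hF0 : F ∅ = 0)
    (A : Fin m → Finset (Fin n)) (hA : IsOrderedPartition A) (w : Fin n → ℝ) :
    (w ∈ compatible A →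
      sSup ((fun s : Fin n → ℝ => ∑ i, w i * s i) '' tangentCone F A) = lovasz F w) ∧
    (w ∉ compatible A →
      ¬ BddAbove ((fun s : Fin n → ℝ => ∑ i, w i * s i) '' tangentCone F A)) := by
  have hgreedy (σ : Equiv.Perm (Fin n)) := greedyPoint_mem_tangentCone hF hF0 A σ
  refine ⟨?_, fun hw => ?_⟩
  · rintro ⟨v, hv, rfl⟩
    refine IsGreatest.csSup_eq ⟨⟨_, hgreedy _, (lovasz_eq_dotProduct_greedyPoint F _).symm⟩, ?_⟩
    rintro _ ⟨s, hs, rfl⟩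
    rw [lovasz_eq_dotProduct_greedyPoint]
    refine hA.dotProduct_le_dotProduct hv (hs.1.trans (hgreedy _).1.symm) fun k hk hlt => ?_
    rw [sum_greedyPoint_sort_of_lt F fun p hp q hq => hA.lt_of_mem_prefixUnion hv hlt hp hq,
      hF0, sub_zero]
    exact hs.2 k hk
  · obtain ⟨p, q, hpq, hlt⟩ := hA.exists_lt_of_notMem_compatible hw
    refine not_bddAbove_image_dotProduct
      (fun t ht => add_smul_single_sub_single_mem_tangentCone (hgreedy 1) hpq ht) ?_
    simpa [dotProduct_sub] using hlt
end
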